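/- arXiv:1610.03379 — 7 statements merged into one kernel-verified Lean document; each statement's English description precedes it below -/
import Mathlib

section
/- For every λ > 0 and every f ∈ C_0^∞(ℝⁿ \ {0}) (complex-valued), one has ‖(λ I + E E*) f‖²_{L²} = λ² ‖f‖²_{L²} + 2λ ‖E f‖²_{L²} + ‖E(nI + E) f‖²_{L²}; in particular ‖(λ I + E E*) f‖_{L²} ≥ λ ‖f‖_{L²}. -/
open MeasureTheory Real
open scoped ComplexConjugate

/-- Integration by parts for the Euler operator: `∫ x·∇g = -n ∫ g`
for `C¹` compactly supported `g`. -/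
lemma euler_integral_eq {n : ℕ} (g : EuclideanSpace ℝ (Fin n) → ℂ)
    (hg : ContDiff ℝ 1 g) (hgc : HasCompactSupport g) :
    ∫ x, fderiv ℝ g x x = -(n : ℂ) * ∫ x, g x := by
  have hgd : Differentiable ℝ g := hg.differentiable one_ne_zero
  have hgcont : Continuous g := hg.continuous
  have hfd : Continuous (fderiv ℝ g) := hg.continuous_fderiv one_ne_zero
  have hint_g : Integrable g := hgcont.integrable_of_hasCompactSupport hgc
  have hint2 : ∀ i : Fin n, Integrable (fun x : EuclideanSpace ℝ (Fin n) =>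
      ((x i : ℝ) : ℂ) * fderiv ℝ g x (EuclideanSpace.single i 1)) := by
    intro i
    apply Continuous.integrable_of_hasCompactSupport
    · exact (Complex.continuous_ofReal.comp (EuclideanSpace.proj i).continuous).mul
        (hfd.clm_apply continuous_const)
    · apply (hgc.fderiv ℝ).mono
      intro x hx
      simp only [Function.mem_support, ne_eq] at hx ⊢
      intro h; apply hx; rw [h]; simp
  have key : ∀ i : Fin n, (∫ x : EuclideanSpace ℝ (Fin n),
      ((x i : ℝ) : ℂ) * fderiv ℝ g x (EuclideanSpace.single i 1)) = - ∫ x, g x := by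
    intro i
    set v : EuclideanSpace ℝ (Fin n) := EuclideanSpace.single i 1 with hv
    set L : EuclideanSpace ℝ (Fin n) →L[ℝ] ℂ :=
      Complex.ofRealCLM.comp (EuclideanSpace.proj i) with hL
    have hc : (fun x : EuclideanSpace ℝ (Fin n) => ((x i : ℝ) : ℂ)) = ⇑L := rfl
    have hfderivc : ∀ x, fderiv ℝ (fun x : EuclideanSpace ℝ (Fin n) => ((x i : ℝ) : ℂ)) x = L := by
      intro x; rw [hc]; exact L.fderiv
    have hLv : L v = 1 := by simp [hL, hv]
    have h1 : Integrable (fun x : EuclideanSpace ℝ (Fin n) =>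
        fderiv ℝ (fun x : EuclideanSpace ℝ (Fin n) => ((x i : ℝ) : ℂ)) x v * g x) := by
      simp only [hfderivc, hLv, one_mul]; exact hint_g
    have h3 : Integrable (fun x : EuclideanSpace ℝ (Fin n) => ((x i : ℝ) : ℂ) * g x) := by
      apply Continuous.integrable_of_hasCompactSupport
      · exact (Complex.continuous_ofReal.comp (EuclideanSpace.proj i).continuous).mul hgcont
      · apply hgc.mono
        intro x hx
        simp only [Function.mem_support, ne_eq] at hx ⊢
        intro h; apply hx; rw [h]; simp
    have := integral_mul_fderiv_eq_neg_fderiv_mul_of_integrable h1 (hint2 i) h3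
      (fun x _ => (hc ▸ L.differentiable) x) (fun x _ => hgd x)
    rw [this]
    simp only [hfderivc, hLv, one_mul]
  have hx : ∀ x : EuclideanSpace ℝ (Fin n), fderiv ℝ g x x
      = ∑ i, ((x i : ℝ) : ℂ) * fderiv ℝ g x (EuclideanSpace.single i 1) := by
    intro x
    have hrep : ∑ i, x i • EuclideanSpace.single i (1:ℝ) = x := by
      have := (EuclideanSpace.basisFun (Fin n) ℝ).sum_repr x
      simpa [EuclideanSpace.basisFun_apply, EuclideanSpace.basisFun_repr] using this
    have h2 : fderiv ℝ g x x = fderiv ℝ g x (∑ i, x i • EuclideanSpace.single i (1:ℝ)) := by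
      rw [hrep]
    rw [h2, map_sum]
    congr 1; ext i
    rw [(fderiv ℝ g x).map_smul]
    simp [Complex.real_smul]
  calc ∫ x, fderiv ℝ g x x
      = ∫ x, ∑ i, ((x i : ℝ) : ℂ) * fderiv ℝ g x (EuclideanSpace.single i 1) := by
        simp_rw [hx]
    _ = ∑ i, ∫ x : EuclideanSpace ℝ (Fin n),
          ((x i : ℝ) : ℂ) * fderiv ℝ g x (EuclideanSpace.single i 1) :=
        integral_finset_sum _ (fun i _ => hint2 i)
    _ = ∑ _i : Fin n, -∫ x, g x := by simp_rw [key]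
    _ = -(n : ℂ) * ∫ x, g x := by
        simp [Finset.sum_const, nsmul_eq_mul]

lemma euler_adjoint {n : ℕ} (u v : EuclideanSpace ℝ (Fin n) → ℂ)
    (hu : ContDiff ℝ 1 u) (huc : HasCompactSupport u)
    (hv : ContDiff ℝ 1 v) (hvc : HasCompactSupport v) :
    (∫ x, conj (u x) * fderiv ℝ v x x)
      = -(n : ℂ) * (∫ x, conj (u x) * v x) - ∫ x, conj (fderiv ℝ u x x) * v x := by
  set J : ℂ →L[ℝ] ℂ := (Complex.conjCLE : ℂ ≃L[ℝ] ℂ).toContinuousLinearMap with hJdef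
  have hJ : ∀ z : ℂ, J z = conj z := fun z => rfl
  have hud : Differentiable ℝ u := hu.differentiable one_ne_zero
  have hvd : Differentiable ℝ v := hv.differentiable one_ne_zero
  have hconj : ContDiff ℝ 1 (fun x : EuclideanSpace ℝ (Fin n) => conj (u x)) :=
    J.contDiff.comp hu
  set h : EuclideanSpace ℝ (Fin n) → ℂ := fun x => conj (u x) * v x with hhdef
  have hh : ContDiff ℝ 1 h := hconj.mul hv
  have hhc : HasCompactSupport h := by
    apply hvc.mono
    intro x hx
    simp only [Function.mem_support, ne_eq, hhdef] at hx ⊢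
    intro h0; apply hx; rw [h0, mul_zero]
  have hderiv : ∀ x, fderiv ℝ h x x
      = conj (fderiv ℝ u x x) * v x + conj (u x) * fderiv ℝ v x x := by
    intro x
    have hcu : DifferentiableAt ℝ (fun x : EuclideanSpace ℝ (Fin n) => conj (u x)) x :=
      (hconj.differentiable one_ne_zero) x
    rw [hhdef]
    rw [fderiv_fun_mul hcu (hvd x)]
    have hfc : fderiv ℝ (fun x : EuclideanSpace ℝ (Fin n) => conj (u x)) x
        = J.comp (fderiv ℝ u x) :=
      (J.hasFDerivAt.comp x (hud x).hasFDerivAt).fderiv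
    rw [hfc]
    simp only [ContinuousLinearMap.add_apply, ContinuousLinearMap.smul_apply,
      ContinuousLinearMap.comp_apply, smul_eq_mul, hJ]
    ring
  have hEu_cont : Continuous fun x : EuclideanSpace ℝ (Fin n) => fderiv ℝ u x x :=
    (hu.continuous_fderiv one_ne_zero).clm_apply continuous_id
  have hEv_cont : Continuous fun x : EuclideanSpace ℝ (Fin n) => fderiv ℝ v x x :=
    (hv.continuous_fderiv one_ne_zero).clm_apply continuous_id
  have hi1 : Integrable (fun x : EuclideanSpace ℝ (Fin n) => conj (fderiv ℝ u x x) * v x) := by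
    apply Continuous.integrable_of_hasCompactSupport
    · exact (J.continuous.comp hEu_cont).mul hv.continuous
    · apply hvc.mono
      intro x hx
      simp only [Function.mem_support, ne_eq] at hx ⊢
      intro h0; apply hx; rw [h0, mul_zero]
  have hi2 : Integrable (fun x : EuclideanSpace ℝ (Fin n) => conj (u x) * fderiv ℝ v x x) := by
    apply Continuous.integrable_of_hasCompactSupport
    · exact (J.continuous.comp hu.continuous).mul hEv_cont
    · apply (hvc.fderiv ℝ).mono
      intro x hx
      simp only [Function.mem_support, ne_eq] at hx ⊢
      intro h0; apply hx; rw [h0]; simp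
  have hmain := euler_integral_eq h hh hhc
  have hsplit : (∫ x, fderiv ℝ h x x)
      = (∫ x, conj (fderiv ℝ u x x) * v x) + ∫ x, conj (u x) * fderiv ℝ v x x := by
    rw [← integral_add hi1 hi2]
    exact integral_congr_ae (Filter.Eventually.of_forall fun x => hderiv x)
  rw [hsplit] at hmain
  rw [hhdef] at hmain
  linear_combination hmain

/-- The Euler operator `E f (x) = x·∇f(x)`. -/
noncomputable def eulerOp {n : ℕ} (f : EuclideanSpace ℝ (Fin n) → ℂ)
    (x : EuclideanSpace ℝ (Fin n)) : ℂ :=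
  fderiv ℝ f x x

/-- For `λ > 0` and `f ∈ C₀^∞(ℝⁿ \ {0})`,
`‖(λI + EE*)f‖² = λ²‖f‖² + 2λ‖Ef‖² + ‖E(nI+E)f‖²`, and in particular
`‖(λI + EE*)f‖_{L²} ≥ λ‖f‖_{L²}` (Komatsu non-negativity of `EE*`). -/
theorem euler_komatsu_identity {n : ℕ} (l : ℝ) (hl : 0 < l)
    (f : EuclideanSpace ℝ (Fin n) → ℂ)
    (hf : ContDiff ℝ (⊤ : ℕ∞) f) (hfc : HasCompactSupport f)
    (hf0 : (0 : EuclideanSpace ℝ (Fin n)) ∉ tsupport f) :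
    (∫ x, ‖(l : ℂ) * f x +
        eulerOp (fun y => -(n : ℂ) * f y - eulerOp f y) x‖ ^ 2) =
      l ^ 2 * (∫ x, ‖f x‖ ^ 2) + 2 * l * (∫ x, ‖eulerOp f x‖ ^ 2) +
        (∫ x, ‖eulerOp (fun y => (n : ℂ) * f y + eulerOp f y) x‖ ^ 2) ∧
    l * Real.sqrt (∫ x, ‖f x‖ ^ 2) ≤
      Real.sqrt (∫ x, ‖(l : ℂ) * f x +
        eulerOp (fun y => -(n : ℂ) * f y - eulerOp f y) x‖ ^ 2) := by
  have hf1 : ContDiff ℝ 1 f := hf.of_le (by simp)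
  -- Ef := eulerOp f
  have hEf : ContDiff ℝ (⊤ : ℕ∞) (eulerOp f) :=
    (hf.fderiv_right (le_of_eq rfl)).clm_apply contDiff_id
  have hEf1 : ContDiff ℝ 1 (eulerOp f) := hEf.of_le (by simp)
  have hEfc : HasCompactSupport (eulerOp f) := by
    apply (hfc.fderiv ℝ).mono
    intro x hx
    simp only [Function.mem_support, ne_eq, eulerOp] at hx ⊢
    intro h0; apply hx; rw [h0]; simp
  set g : EuclideanSpace ℝ (Fin n) → ℂ := fun y => (n : ℂ) * f y + eulerOp f y with hgdef
  have hg : ContDiff ℝ (⊤ : ℕ∞) g := (contDiff_const.mul hf).add hEf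
  have hg1 : ContDiff ℝ 1 g := hg.of_le (by simp)
  have hvan : ∀ x ∉ tsupport f, f x = 0 := fun x hx => image_eq_zero_of_notMem_tsupport hx
  have hEvan : ∀ x ∉ tsupport f, eulerOp f x = 0 := by
    intro x hx
    have h0 : fderiv ℝ f x = 0 := by
      by_contra h
      exact hx (support_fderiv_subset ℝ (Function.mem_support.2 h))
    simp [eulerOp, h0]
  have hgvan : ∀ x ∉ tsupport f, g x = 0 := by
    intro x hx; simp [hgdef, hvan x hx, hEvan x hx]
  have hgc : HasCompactSupport g := HasCompactSupport.intro hfc hgvan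
  -- Eg := eulerOp g
  have hEg : ContDiff ℝ (⊤ : ℕ∞) (eulerOp g) :=
    (hg.fderiv_right (le_of_eq rfl)).clm_apply contDiff_id
  have hEgvan : ∀ x ∉ tsupport f, eulerOp g x = 0 := by
    intro x hx
    have hts : tsupport g ⊆ tsupport f :=
      closure_minimal (fun y hy => by
        by_contra hy'
        exact Function.mem_support.1 hy (hgvan y hy')) isClosed_closure
    have h0 : fderiv ℝ g x = 0 := by
      by_contra h
      exact hx (hts (tsupport_fderiv_subset ℝ (subset_tsupport _ (Function.mem_support.2 h))))
    simp [eulerOp, h0]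
  -- continuity facts
  have hfcont : Continuous f := hf.continuous
  have hEfcont : Continuous (eulerOp f) := hEf.continuous
  have hgcont : Continuous g := hg.continuous
  have hEgcont : Continuous (eulerOp g) := hEg.continuous
  -- integrability helper
  have mkI : ∀ (φ : EuclideanSpace ℝ (Fin n) → ℝ), Continuous φ →
      (∀ x ∉ tsupport f, φ x = 0) → Integrable φ := fun φ hc h0 =>
    hc.integrable_of_hasCompactSupport (HasCompactSupport.intro hfc h0)
  have mkIC : ∀ (φ : EuclideanSpace ℝ (Fin n) → ℂ), Continuous φ →
      (∀ x ∉ tsupport f, φ x = 0) → Integrable φ := fun φ hc h0 =>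
    hc.integrable_of_hasCompactSupport (HasCompactSupport.intro hfc h0)
  set J : ℂ →L[ℝ] ℂ := (Complex.conjCLE : ℂ ≃L[ℝ] ℂ).toContinuousLinearMap with hJdef
  have hJ : ∀ z : ℂ, J z = conj z := fun z => rfl
  -- complex integrabilities
  have i_ff : Integrable (fun x => conj (f x) * f x) :=
    mkIC _ ((J.continuous.comp hfcont).mul hfcont) (fun x hx => by rw [hvan x hx]; simp)
  have i_fE : Integrable (fun x => conj (f x) * eulerOp f x) :=
    mkIC _ ((J.continuous.comp hfcont).mul hEfcont) (fun x hx => by rw [hEvan x hx]; simp)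
  have i_Ef : Integrable (fun x => conj (eulerOp f x) * f x) :=
    mkIC _ ((J.continuous.comp hEfcont).mul hfcont) (fun x hx => by rw [hvan x hx]; simp)
  have i_EE : Integrable (fun x => conj (eulerOp f x) * eulerOp f x) :=
    mkIC _ ((J.continuous.comp hEfcont).mul hEfcont) (fun x hx => by rw [hEvan x hx]; simp)
  have i_fEg : Integrable (fun x => conj (f x) * eulerOp g x) :=
    mkIC _ ((J.continuous.comp hfcont).mul hEgcont) (fun x hx => by rw [hEgvan x hx]; simp)
  -- adjoint identities
  have h1 : (∫ x, conj (f x) * eulerOp f x)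
      = -(n : ℂ) * (∫ x, conj (f x) * f x) - ∫ x, conj (eulerOp f x) * f x :=
    euler_adjoint f f hf1 hfc hf1 hfc
  have h2 : (∫ x, conj (f x) * eulerOp g x)
      = -(n : ℂ) * (∫ x, conj (f x) * g x) - ∫ x, conj (eulerOp f x) * g x :=
    euler_adjoint f g hf1 hfc hg1 hgc
  have h3 : (∫ x, conj (f x) * g x)
      = (n : ℂ) * (∫ x, conj (f x) * f x) + ∫ x, conj (f x) * eulerOp f x := by
    rw [← integral_const_mul, ← integral_add (i_ff.const_mul _) i_fE]
    apply integral_congr_ae (Filter.Eventually.of_forall fun x => ?_)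
    simp only [hgdef]; ring
  have h4 : (∫ x, conj (eulerOp f x) * g x)
      = (n : ℂ) * (∫ x, conj (eulerOp f x) * f x) + ∫ x, conj (eulerOp f x) * eulerOp f x := by
    rw [← integral_const_mul, ← integral_add (i_Ef.const_mul _) i_EE]
    apply integral_congr_ae (Filter.Eventually.of_forall fun x => ?_)
    simp only [hgdef]; ring
  have hKey : (∫ x, conj (f x) * eulerOp g x)
      = -∫ x, conj (eulerOp f x) * eulerOp f x := by
    rw [h3, h4] at h2
    linear_combination h2 - (n : ℂ) * h1
  -- conj z * z = ‖z‖²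
  have hcc : ∀ z : ℂ, conj z * z = ((‖z‖ ^ 2 : ℝ) : ℂ) := by
    intro z
    rw [mul_comm, Complex.mul_conj]
    norm_cast
    rw [Complex.normSq_eq_norm_sq]
  have hQ : (∫ x, conj (eulerOp f x) * eulerOp f x)
      = ((∫ x, ‖eulerOp f x‖ ^ 2 : ℝ) : ℂ) := by
    rw [integral_congr_ae (Filter.Eventually.of_forall fun x => hcc (eulerOp f x))]
    exact integral_ofReal
  have hRe : (∫ x, (conj (f x) * eulerOp g x).re) = -(∫ x, ‖eulerOp f x‖ ^ 2) := by
    have := integral_re i_fEg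
    simp only [RCLike.re_to_complex] at this
    rw [this, hKey, hQ]
    simp
  -- pointwise norm identity
  have pt : ∀ a b : ℂ, ‖(l : ℂ) * a - b‖ ^ 2
      = l ^ 2 * ‖a‖ ^ 2 - 2 * l * ((conj a) * b).re + ‖b‖ ^ 2 := by
    intro a b
    have hz : ∀ z : ℂ, ‖z‖ ^ 2 = z.re * z.re + z.im * z.im := fun z => by
      rw [Complex.sq_norm, Complex.normSq_apply]
    simp only [hz, Complex.sub_re, Complex.sub_im, Complex.mul_re, Complex.mul_im,
      Complex.conj_re, Complex.conj_im, Complex.ofReal_re, Complex.ofReal_im]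
    ring
  -- rewrite integrand of LHS
  have hneg : ∀ x, eulerOp (fun y => -(n : ℂ) * f y - eulerOp f y) x = -(eulerOp g x) := by
    intro x
    have hfun : (fun y => -(n : ℂ) * f y - eulerOp f y) = fun y => -g y := by
      funext y; simp only [hgdef]; ring
    rw [hfun]
    show fderiv ℝ (fun y => -g y) x x = -(fderiv ℝ g x x)
    rw [fderiv_fun_neg]
    simp
  have hLHSpt : ∀ x, ‖(l : ℂ) * f x + eulerOp (fun y => -(n : ℂ) * f y - eulerOp f y) x‖ ^ 2
      = l ^ 2 * ‖f x‖ ^ 2 - 2 * l * ((conj (f x)) * eulerOp g x).re + ‖eulerOp g x‖ ^ 2 := by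
    intro x
    rw [hneg x, ← sub_eq_add_neg, pt]
  -- real integrabilities
  have rA : Integrable (fun x => ‖f x‖ ^ 2) :=
    mkI _ ((hfcont.norm).pow 2) (fun x hx => by rw [hvan x hx]; simp)
  have rC : Integrable (fun x => ‖eulerOp g x‖ ^ 2) :=
    mkI _ ((hEgcont.norm).pow 2) (fun x hx => by rw [hEgvan x hx]; simp)
  have rR : Integrable (fun x => ((conj (f x)) * eulerOp g x).re) :=
    mkI _ (Complex.continuous_re.comp ((J.continuous.comp hfcont).mul hEgcont))
      (fun x hx => by rw [hEgvan x hx]; simp)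
  -- main identity
  have heq : (∫ x, ‖(l : ℂ) * f x + eulerOp (fun y => -(n : ℂ) * f y - eulerOp f y) x‖ ^ 2)
      = l ^ 2 * (∫ x, ‖f x‖ ^ 2) + 2 * l * (∫ x, ‖eulerOp f x‖ ^ 2) +
        (∫ x, ‖eulerOp (fun y => (n : ℂ) * f y + eulerOp f y) x‖ ^ 2) := by
    have split : (∫ x, ‖(l : ℂ) * f x + eulerOp (fun y => -(n : ℂ) * f y - eulerOp f y) x‖ ^ 2)
        = (∫ x, l ^ 2 * ‖f x‖ ^ 2) - (∫ x, 2 * l * ((conj (f x)) * eulerOp g x).re)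
          + ∫ x, ‖eulerOp g x‖ ^ 2 :=
      calc (∫ x, ‖(l : ℂ) * f x + eulerOp (fun y => -(n : ℂ) * f y - eulerOp f y) x‖ ^ 2)
          = ∫ x, (l ^ 2 * ‖f x‖ ^ 2 - 2 * l * ((conj (f x)) * eulerOp g x).re
              + ‖eulerOp g x‖ ^ 2) :=
            integral_congr_ae (Filter.Eventually.of_forall fun x => hLHSpt x)
        _ = (∫ x, (l ^ 2 * ‖f x‖ ^ 2 - 2 * l * ((conj (f x)) * eulerOp g x).re))
              + ∫ x, ‖eulerOp g x‖ ^ 2 :=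
            integral_add ((rA.const_mul _).sub (rR.const_mul _)) rC
        _ = (∫ x, l ^ 2 * ‖f x‖ ^ 2) - (∫ x, 2 * l * ((conj (f x)) * eulerOp g x).re)
              + ∫ x, ‖eulerOp g x‖ ^ 2 := by
            rw [integral_sub (rA.const_mul _) (rR.const_mul _)]
    rw [split, integral_const_mul, integral_const_mul, hRe]
    have : (fun y => (n : ℂ) * f y + eulerOp f y) = g := rfl
    rw [this]
    ring
  refine ⟨heq, ?_⟩
  rw [heq]
  have hA : 0 ≤ ∫ x, ‖f x‖ ^ 2 := integral_nonneg fun x => by positivity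
  have hB : 0 ≤ ∫ x, ‖eulerOp f x‖ ^ 2 := integral_nonneg fun x => by positivity
  have hC : 0 ≤ ∫ x, ‖eulerOp g x‖ ^ 2 := integral_nonneg fun x => by positivity
  have : (fun y => (n : ℂ) * f y + eulerOp f y) = g := rfl
  rw [this]
  have step : l * Real.sqrt (∫ x, ‖f x‖ ^ 2) = Real.sqrt (l ^ 2 * ∫ x, ‖f x‖ ^ 2) := by
    rw [Real.sqrt_mul (by positivity), Real.sqrt_sq hl.le]
  rw [step]
  apply Real.sqrt_le_sqrt
  nlinarith [hB, hC, hl.le]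
end

section
/- For every complex-valued f ∈ C_0^∞(ℝⁿ \ {0}), the exact L² identity ‖E f‖²_{L²(ℝⁿ)} = (n/2)² ‖f‖²_{L²(ℝⁿ)} + ‖E f + (n/2) f‖²_{L²(ℝⁿ)} holds, where E f(x) = x·∇f(x). -/
open MeasureTheory Real

lemma euclidean_clm_expand {n : ℕ} (x : EuclideanSpace ℝ (Fin n))
    (L : EuclideanSpace ℝ (Fin n) →L[ℝ] ℝ) :
    L x = ∑ i, x i * L (EuclideanSpace.single i 1) := by
  have hxe : x = ∑ i, x i • (EuclideanSpace.single i 1 : EuclideanSpace ℝ (Fin n)) := by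
    have := (EuclideanSpace.basisFun (Fin n) ℝ).sum_repr x
    simpa [EuclideanSpace.basisFun_repr, EuclideanSpace.basisFun_apply] using this.symm
  conv_lhs => rw [hxe]
  simp [map_sum]

/-- For `f ∈ C₀^∞(ℝⁿ \ {0})`, the exact `L²` identity
`‖E f‖² = (n/2)² ‖f‖² + ‖E f + (n/2) f‖²`. -/
theorem euler_L2_remainder {n : ℕ} (f : EuclideanSpace ℝ (Fin n) → ℂ)
    (hf : ContDiff ℝ (⊤ : ℕ∞) f) (hfc : HasCompactSupport f)
    (hf0 : (0 : EuclideanSpace ℝ (Fin n)) ∉ tsupport f) :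
    (∫ x, ‖eulerOp f x‖ ^ 2) =
      ((n : ℝ) / 2) ^ 2 * (∫ x, ‖f x‖ ^ 2) +
        ∫ x, ‖eulerOp f x + ((n : ℂ) / 2) * f x‖ ^ 2 := by
  classical
  have hfd : Differentiable ℝ f := hf.differentiable (by simp)
  have key : ∀ h : EuclideanSpace ℝ (Fin n) → ℝ, Continuous h →
      (∀ x, x ∉ tsupport f → h x = 0) → Integrable h := fun h hc h0 =>
    hc.integrable_of_hasCompactSupport (HasCompactSupport.intro hfc h0)
  have hfd' : Continuous (fderiv ℝ f) := (hf.fderiv_right (m := 0) (by simp)).continuous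
  have hEf_cont : Continuous (eulerOp f) := hfd'.clm_apply continuous_id
  have hf_cont : Continuous f := hf.continuous
  have hEfz : ∀ x, x ∉ tsupport f → eulerOp f x = 0 := by
    intro x hx
    have h0 : fderiv ℝ f x = 0 := by
      by_contra h0
      exact hx (support_fderiv_subset ℝ h0)
    simp [eulerOp, h0]
  set g : EuclideanSpace ℝ (Fin n) → ℝ := fun x => ‖f x‖ ^ 2 with hg_def
  have hgsm : ContDiff ℝ (⊤ : ℕ∞) g := hf.norm_sq ℝ
  have hgd : Differentiable ℝ g := hgsm.differentiable (by simp)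
  have hg_cont : Continuous g := hgsm.continuous
  have hg'c : Continuous (fderiv ℝ g) := (hgsm.fderiv_right (m := 0) (by simp)).continuous
  have hgz : ∀ x, x ∉ tsupport f → g x = 0 := by
    intro x hx; simp [hg_def, image_eq_zero_of_notMem_tsupport hx]
  have hg'z : ∀ x, x ∉ tsupport f → fderiv ℝ g x = 0 := by
    intro x hx
    by_contra h0
    have h1 : x ∈ tsupport g := support_fderiv_subset ℝ h0
    have h2 : tsupport g ⊆ tsupport f := by
      apply closure_minimal _ isClosed_closure
      intro y hy
      apply subset_closure
      intro hfy
      apply hy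
      simp [hg_def, hfy]
    exact hx (h2 h1)
  have hg' : ∀ x v, fderiv ℝ g x v = 2 * (inner ℝ (f x) (fderiv ℝ f x v) : ℝ) := by
    intro x v
    have hd := (hfd x).hasFDerivAt
    have h := (hd.inner ℝ hd : HasFDerivAt (fun y => (inner ℝ (f y) (f y) : ℝ)) _ x)
    have h2 : (fun y => (inner ℝ (f y) (f y) : ℝ)) = g := by
      ext y; exact real_inner_self_eq_norm_sq _
    rw [h2] at h
    rw [h.fderiv]
    simp [real_inner_comm]
    ring
  -- integration by parts in each coordinate direction
  have ibp : ∀ i : Fin n,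
      ∫ x, x i * fderiv ℝ g x (EuclideanSpace.single i 1) = - ∫ x, g x := by
    intro i
    have hcoord : Differentiable ℝ (fun x : EuclideanSpace ℝ (Fin n) => x i) :=
      (EuclideanSpace.proj i : EuclideanSpace ℝ (Fin n) →L[ℝ] ℝ).differentiable
    have hcoord' : ∀ x : EuclideanSpace ℝ (Fin n),
        fderiv ℝ (fun y : EuclideanSpace ℝ (Fin n) => y i) x
          = (EuclideanSpace.proj i : EuclideanSpace ℝ (Fin n) →L[ℝ] ℝ) :=
      fun _ => (EuclideanSpace.proj i : EuclideanSpace ℝ (Fin n) →L[ℝ] ℝ).fderiv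
    have hone : ∀ x : EuclideanSpace ℝ (Fin n),
        fderiv ℝ (fun y : EuclideanSpace ℝ (Fin n) => y i) x (EuclideanSpace.single i 1)
          = 1 := by
      intro x
      rw [hcoord']
      show (EuclideanSpace.single i (1 : ℝ) : EuclideanSpace ℝ (Fin n)) i = 1
      simp [EuclideanSpace.single_apply]
    have h := integral_mul_fderiv_eq_neg_fderiv_mul_of_integrable
      (μ := (volume : Measure (EuclideanSpace ℝ (Fin n))))
      (f := fun x : EuclideanSpace ℝ (Fin n) => x i) (g := g)
      (v := EuclideanSpace.single i 1) ?_ ?_ ?_ (fun x _ => hcoord x) (fun x _ => hgd x)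
    · rw [h]
      congr 1
      apply integral_congr_ae
      filter_upwards with x
      rw [hone x, one_mul]
    · apply key
      · exact Continuous.mul (by
          simpa only [funext hone] using (continuous_const : Continuous
            (fun _ : EuclideanSpace ℝ (Fin n) => (1 : ℝ)))) hg_cont
      · intro x hx; rw [hgz x hx, mul_zero]
    · apply key
      · exact ((EuclideanSpace.proj i :
            EuclideanSpace ℝ (Fin n) →L[ℝ] ℝ).continuous).mul
          (hg'c.clm_apply continuous_const)
      · intro x hx; rw [hg'z x hx]; simp
    · apply key
      · exact ((EuclideanSpace.proj i :
            EuclideanSpace ℝ (Fin n) →L[ℝ] ℝ).continuous).mul hg_cont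
      · intro x hx; rw [hgz x hx, mul_zero]
  -- summing up: ∫ E g = -n ∫ g
  have hint : ∀ i : Fin n,
      Integrable (fun x : EuclideanSpace ℝ (Fin n) =>
        x i * fderiv ℝ g x (EuclideanSpace.single i 1)) := by
    intro i
    apply key
    · exact ((EuclideanSpace.proj i :
        EuclideanSpace ℝ (Fin n) →L[ℝ] ℝ).continuous).mul
        (hg'c.clm_apply continuous_const)
    · intro x hx; rw [hg'z x hx]; simp
  have hsum : ∫ x, fderiv ℝ g x x = -(n : ℝ) * ∫ x, g x := by
    have hx_expand : (fun x : EuclideanSpace ℝ (Fin n) => fderiv ℝ g x x)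
        = fun x => ∑ i, x i * fderiv ℝ g x (EuclideanSpace.single i 1) := by
      ext x
      exact euclidean_clm_expand x (fderiv ℝ g x)
    rw [hx_expand, integral_finset_sum _ (fun i _ => hint i)]
    simp only [ibp]
    simp [Finset.sum_const, Finset.card_univ]
  have hinner : ∫ x, (inner ℝ (f x) (eulerOp f x) : ℝ) = -((n : ℝ) / 2) * ∫ x, g x := by
    have h1 : (fun x : EuclideanSpace ℝ (Fin n) => fderiv ℝ g x x)
        = fun x => 2 * (inner ℝ (f x) (eulerOp f x) : ℝ) := by
      ext x; exact hg' x x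
    rw [h1] at hsum
    rw [show (fun x : EuclideanSpace ℝ (Fin n) => 2 * (inner ℝ (f x) (eulerOp f x) : ℝ))
        = fun x => (2 : ℝ) * (inner ℝ (f x) (eulerOp f x) : ℝ) from rfl] at hsum
    rw [MeasureTheory.integral_const_mul] at hsum
    linarith
  -- pointwise expansion of the remainder term
  have hpt : ∀ x, ‖eulerOp f x + ((n : ℂ) / 2) * f x‖ ^ 2
      = ‖eulerOp f x‖ ^ 2 + (n : ℝ) * (inner ℝ (eulerOp f x) (f x) : ℝ)
        + ((n : ℝ) / 2) ^ 2 * ‖f x‖ ^ 2 := by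
    intro x
    have hs : ((n : ℂ) / 2) * f x = ((n : ℝ) / 2) • f x := by
      rw [Complex.real_smul]; norm_num
    rw [hs, norm_add_sq_real, real_inner_smul_right, norm_smul]
    rw [Real.norm_eq_abs, mul_pow, sq_abs]
    ring
  have I1 : Integrable (fun x => ‖eulerOp f x‖ ^ 2) := by
    apply key
    · exact (hEf_cont.norm).pow 2
    · intro x hx; rw [hEfz x hx]; simp
  have I2 : Integrable (fun x => (n : ℝ) * (inner ℝ (eulerOp f x) (f x) : ℝ)) := by
    apply key
    · exact continuous_const.mul (hEf_cont.inner hf_cont)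
    · intro x hx; rw [hEfz x hx]; simp
  have I3 : Integrable (fun x => ((n : ℝ) / 2) ^ 2 * g x) := by
    apply key
    · exact continuous_const.mul hg_cont
    · intro x hx; rw [hgz x hx]; simp
  have hsplit : ∫ x, ‖eulerOp f x + ((n : ℂ) / 2) * f x‖ ^ 2
      = (∫ x, ‖eulerOp f x‖ ^ 2) + (n : ℝ) * (∫ x, (inner ℝ (eulerOp f x) (f x) : ℝ))
        + ((n : ℝ) / 2) ^ 2 * ∫ x, g x := by
    have e1 : ∫ x, ‖eulerOp f x + ((n : ℂ) / 2) * f x‖ ^ 2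
        = ∫ x, (‖eulerOp f x‖ ^ 2 + (n : ℝ) * (inner ℝ (eulerOp f x) (f x) : ℝ)
          + ((n : ℝ) / 2) ^ 2 * g x) :=
      integral_congr_ae (Filter.Eventually.of_forall fun x => hpt x)
    have I12 : Integrable (fun x => ‖eulerOp f x‖ ^ 2
        + (n : ℝ) * (inner ℝ (eulerOp f x) (f x) : ℝ)) := I1.add I2
    rw [e1, integral_add I12 I3, integral_add I1 I2,
      MeasureTheory.integral_const_mul, MeasureTheory.integral_const_mul]
  have hcomm : ∫ x, (inner ℝ (eulerOp f x) (f x) : ℝ) = -((n : ℝ) / 2) * ∫ x, g x := by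
    rw [← hinner]
    congr 1
    ext x
    exact real_inner_comm _ _
  rw [hsplit, hcomm]
  ring
end

section
/- Let α ∈ ℝ. For every complex-valued f ∈ C_0^∞(ℝⁿ \ {0}), the weighted identity ‖ |x|^{−α} E f ‖²_{L²(ℝⁿ)} = (n/2 − α)² ‖ |x|^{−α} f ‖²_{L²(ℝⁿ)} + ‖ |x|^{−α} E f + ((n−2α)/(2)) |x|^{−α} f ‖²_{L²(ℝⁿ)} holds. -/
open MeasureTheory Real

variable {n : ℕ}
local notation "Euc" => EuclideanSpace ℝ (Fin n)

lemma fderiv_zero_of_nmem_tsupport {F : Type*} [NormedAddCommGroup F] [NormedSpace ℝ F]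
    {f : Euc → F} {x : Euc} (h : x ∉ tsupport f) :
    fderiv ℝ f x = 0 := by
  have hev : f =ᶠ[nhds x] (fun _ => 0) := by
    filter_upwards [(isClosed_tsupport f).isOpen_compl.mem_nhds h] with y hy
    exact image_eq_zero_of_notMem_tsupport hy
  rw [hev.fderiv_eq, fderiv_fun_const]
  rfl

lemma euclid_sum_single (x : Euc) :
    ∑ i, x i • EuclideanSpace.single i (1:ℝ) = x := by
  have := (EuclideanSpace.basisFun (Fin n) ℝ).sum_repr x
  simpa [EuclideanSpace.basisFun_apply, EuclideanSpace.basisFun_repr] using this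

lemma clm_eval_sum (x : Euc) (L : Euc →L[ℝ] ℝ) :
    L x = ∑ i, x i * L (EuclideanSpace.single i 1) := by
  rw [show L x = L (∑ i, x i • EuclideanSpace.single i (1:ℝ)) by rw [euclid_sum_single], map_sum]
  simp [smul_eq_mul]

lemma core_divergence (α : ℝ) {W φ : Euc → ℝ}
    (hW : ContDiff ℝ 1 W) (hφ : ContDiff ℝ 1 φ) (hφc : HasCompactSupport φ)
    (hWφ : ∀ x, fderiv ℝ W x x * φ x = (-2*α) * (W x * φ x)) :
    ∫ x, W x * fderiv ℝ φ x x = (-(n:ℝ) + 2*α) * ∫ x, W x * φ x := by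
  have hWc : Continuous W := hW.continuous
  have hφcont : Continuous φ := hφ.continuous
  have hWd : Differentiable ℝ W := hW.differentiable one_ne_zero
  have hφd : Differentiable ℝ φ := hφ.differentiable one_ne_zero
  have hW' : Continuous (fderiv ℝ W) := hW.continuous_fderiv one_ne_zero
  have hφ' : Continuous (fderiv ℝ φ) := hφ.continuous_fderiv one_ne_zero
  set e : Fin n → Euc := fun i => EuclideanSpace.single i (1:ℝ) with he
  set G : Fin n → Euc → ℝ := fun i x => x i * φ x with hG
  have hGd : ∀ i, Differentiable ℝ (G i) :=
    fun i => ((EuclideanSpace.proj i : Euc →L[ℝ] ℝ).differentiable).mul hφd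
  have hGc : ∀ i, HasCompactSupport (G i) := fun i => hφc.mul_left
  have hGcont : ∀ i, Continuous (G i) :=
    fun i => ((EuclideanSpace.proj i : Euc →L[ℝ] ℝ).continuous).mul hφcont
  have hGder' : ∀ i, Continuous (fun x => fderiv ℝ (G i) x (e i)) := by
    intro i
    have : ContDiff ℝ 1 (G i) := ((EuclideanSpace.proj i : Euc →L[ℝ] ℝ).contDiff).mul hφ
    exact (this.continuous_fderiv one_ne_zero).clm_apply continuous_const
  -- derivative of G i
  have hGder : ∀ i x, fderiv ℝ (G i) x (e i) = φ x + x i * fderiv ℝ φ x (e i) := by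
    intro i x
    have hproj : DifferentiableAt ℝ (fun y : Euc => y i) x :=
      ((EuclideanSpace.proj i : Euc →L[ℝ] ℝ).differentiable).differentiableAt
    have hmul : fderiv ℝ (G i) x = x i • fderiv ℝ φ x + φ x • fderiv ℝ (fun y : Euc => y i) x :=
      fderiv_mul hproj (hφd x)
    rw [hmul]
    have hpd : fderiv ℝ (fun y : Euc => y i) x = (EuclideanSpace.proj i : Euc →L[ℝ] ℝ) :=
      (EuclideanSpace.proj i : Euc →L[ℝ] ℝ).fderiv
    simp only [ContinuousLinearMap.add_apply, ContinuousLinearMap.coe_smul', Pi.smul_apply, hpd,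
      smul_eq_mul]
    have h1 : (EuclideanSpace.proj i : Euc →L[ℝ] ℝ) (e i) = 1 := by
      simp [he, EuclideanSpace.single_apply]
    rw [h1]; ring
  -- IBP coordinatewise
  have hibp : ∀ i, ∫ x, W x * fderiv ℝ (G i) x (e i) = -∫ x, fderiv ℝ W x (e i) * G i x := by
    intro i
    apply integral_mul_fderiv_eq_neg_fderiv_mul_of_integrable
    · exact ((hW'.clm_apply continuous_const).mul (hGcont i)).integrable_of_hasCompactSupport
        (hGc i).mul_left
    · exact (hWc.mul (hGder' i)).integrable_of_hasCompactSupport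
        ((hGc i).fderiv_apply ℝ (e i)).mul_left
    · exact (hWc.mul (hGcont i)).integrable_of_hasCompactSupport (hGc i).mul_left
    · exact fun x _ => hWd x
    · exact fun x _ => hGd i x
  -- integrability of the two pieces
  have hEφc : Continuous (fun x => fderiv ℝ φ x x) := hφ'.clm_apply continuous_id
  have hEφsupp : HasCompactSupport (fun x => W x * fderiv ℝ φ x x) := by
    apply HasCompactSupport.intro hφc
    intro x hx
    rw [fderiv_zero_of_nmem_tsupport hx]
    simp
  have hint1 : Integrable (fun x => W x * fderiv ℝ φ x x) :=
    (hWc.mul hEφc).integrable_of_hasCompactSupport hEφsupp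
  have hint2 : Integrable (fun x => W x * φ x) :=
    (hWc.mul hφcont).integrable_of_hasCompactSupport hφc.mul_left
  -- sum of LHS
  have hL : ∑ i, ∫ x, W x * fderiv ℝ (G i) x (e i)
      = ∫ x, (W x * fderiv ℝ φ x x + (n : ℝ) * (W x * φ x)) := by
    rw [← integral_finset_sum]
    · apply integral_congr_ae
      filter_upwards with x
      rw [Finset.sum_congr rfl (fun i _ => by rw [hGder i x])]
      have : ∑ i, W x * (φ x + x i * fderiv ℝ φ x (e i))
          = W x * (∑ i, x i * fderiv ℝ φ x (e i)) + (n:ℝ) * (W x * φ x) := by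
        rw [Finset.sum_congr rfl (fun i _ => by ring_nf : ∀ i ∈ Finset.univ,
          W x * (φ x + x i * fderiv ℝ φ x (e i)) = W x * φ x + W x * (x i * fderiv ℝ φ x (e i)))]
        rw [Finset.sum_add_distrib, Finset.sum_const, ← Finset.mul_sum]
        simp [Finset.card_univ]
        ring
      rw [this, ← clm_eval_sum x (fderiv ℝ φ x)]
    · intro i _
      exact (hWc.mul (hGder' i)).integrable_of_hasCompactSupport
        ((hGc i).fderiv_apply ℝ (e i)).mul_left
  -- sum of RHS
  have hR : ∑ i, -∫ x, fderiv ℝ W x (e i) * G i x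
      = -∫ x, fderiv ℝ W x x * φ x := by
    rw [Finset.sum_neg_distrib]
    congr 1
    rw [← integral_finset_sum]
    · apply integral_congr_ae
      filter_upwards with x
      have h2 : ∑ i, fderiv ℝ W x (e i) * G i x = (∑ i, x i * fderiv ℝ W x (e i)) * φ x := by
        rw [Finset.sum_mul]
        exact Finset.sum_congr rfl (fun i _ => by simp only [hG]; ring)
      rw [h2, ← clm_eval_sum x (fderiv ℝ W x)]
    · intro i _
      exact ((hW'.clm_apply continuous_const).mul (hGcont i)).integrable_of_hasCompactSupport
        (hGc i).mul_left
  have hmain : ∫ x, (W x * fderiv ℝ φ x x + (n : ℝ) * (W x * φ x))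
      = -∫ x, fderiv ℝ W x x * φ x := by
    rw [← hL, ← hR]
    exact Finset.sum_congr rfl (fun i _ => hibp i)
  have hsub : -∫ x, fderiv ℝ W x x * φ x = (2*α) * ∫ x, W x * φ x := by
    have : ∫ x, fderiv ℝ W x x * φ x = ∫ x, (-2*α) * (W x * φ x) := by
      apply integral_congr_ae
      filter_upwards with x
      exact hWφ x
    rw [this, integral_const_mul]
    ring
  have hsplit : ∫ x, (W x * fderiv ℝ φ x x + (n : ℝ) * (W x * φ x))
      = (∫ x, W x * fderiv ℝ φ x x) + (n:ℝ) * ∫ x, W x * φ x := by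
    rw [integral_add hint1 (hint2.const_mul _), integral_const_mul]
  rw [hsplit, hsub] at hmain
  linarith [hmain]

/-- For `α ∈ ℝ` and `f ∈ C₀^∞(ℝⁿ \ {0})`, the weighted identity
`‖|x|^{-α} E f‖² = (n/2 - α)² ‖|x|^{-α} f‖² + ‖|x|^{-α} E f + ((n-2α)/2)|x|^{-α} f‖²`. -/
theorem euler_weighted_L2_identity {n : ℕ} (α : ℝ)
    (f : EuclideanSpace ℝ (Fin n) → ℂ)
    (hf : ContDiff ℝ (⊤ : ℕ∞) f) (hfc : HasCompactSupport f)
    (hf0 : (0 : EuclideanSpace ℝ (Fin n)) ∉ tsupport f) :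
    (∫ x, ‖x‖ ^ (-(2 : ℝ) * α) * ‖eulerOp f x‖ ^ 2) =
      ((n : ℝ) / 2 - α) ^ 2 * (∫ x, ‖x‖ ^ (-(2 : ℝ) * α) * ‖f x‖ ^ 2) +
        ∫ x, ‖x‖ ^ (-(2 : ℝ) * α) *
          ‖eulerOp f x + ((((n : ℝ) - 2 * α) / 2 : ℝ) : ℂ) * f x‖ ^ 2 := by
  classical
  set c : ℝ := ((n : ℝ) - 2 * α) / 2 with hc
  -- distance from 0 to the support
  obtain ⟨δ, hδpos, hδ⟩ : ∃ δ > 0, Metric.ball (0 : EuclideanSpace ℝ (Fin n)) δ ⊆ (tsupport f)ᶜ :=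
    Metric.mem_nhds_iff.1 ((isClosed_tsupport f).isOpen_compl.mem_nhds hf0)
  have hsupp_norm : ∀ x ∈ tsupport f, δ ≤ ‖x‖ := by
    intro x hx
    by_contra h
    exact (hδ (by simpa [Metric.mem_ball, dist_zero_right] using lt_of_not_ge h)) hx
  -- the cutoff and the smoothed weight
  let χ : ContDiffBump (0 : EuclideanSpace ℝ (Fin n)) := ⟨δ/2, 2*δ/3, by linarith, by linarith⟩
  set W : EuclideanSpace ℝ (Fin n) → ℝ :=
    fun x => (1 - χ x) * (inner ℝ x x : ℝ) ^ (-α) with hWdef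
  have hχ0 : ∀ x : EuclideanSpace ℝ (Fin n), 2*δ/3 ≤ ‖x‖ → χ x = 0 := by
    intro x hx
    apply Function.notMem_support.1
    rw [χ.support_eq]
    simp only [Metric.mem_ball, dist_zero_right]
    exact not_lt.2 hx
  have hinner_eq : ∀ x : EuclideanSpace ℝ (Fin n),
      (inner ℝ x x : ℝ) ^ (-α) = ‖x‖ ^ (-(2:ℝ) * α) := by
    intro x
    rw [real_inner_self_eq_norm_sq, ← Real.rpow_natCast ‖x‖ 2, ← Real.rpow_mul (norm_nonneg x)]
    norm_num
  have hWeq : ∀ x : EuclideanSpace ℝ (Fin n), 2*δ/3 ≤ ‖x‖ → W x = ‖x‖ ^ (-(2:ℝ) * α) := by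
    intro x hx
    rw [hWdef]; simp only [hχ0 x hx, sub_zero, one_mul]; exact hinner_eq x
  -- smoothness of W
  have hWsmooth : ContDiff ℝ 1 W := by
    rw [contDiff_iff_contDiffAt]
    intro x
    rcases lt_or_ge ‖x‖ (δ/2) with hx | hx
    · have hev : W =ᶠ[nhds x] (fun _ => 0) := by
        filter_upwards [Metric.ball_mem_nhds x (by linarith : (0:ℝ) < δ/2 - ‖x‖)] with y hy
        have hyn : ‖y‖ < δ/2 := by
          have h1 := norm_sub_norm_le y x
          have hyx : ‖y - x‖ < δ/2 - ‖x‖ := by simpa [dist_eq_norm] using hy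
          linarith
        have : χ y = 1 := χ.one_of_mem_closedBall
          (by simpa [Metric.mem_closedBall, dist_zero_right] using hyn.le)
        simp [hWdef, this]
      exact (contDiffAt_const (c := (0:ℝ)) (n := 1)).congr_of_eventuallyEq hev
    · have hx0 : x ≠ 0 := by
        intro h; rw [h] at hx; simp at hx; linarith
      have h1 : ContDiffAt ℝ 1 (fun y : EuclideanSpace ℝ (Fin n) => (1 - χ y)) x :=
        contDiffAt_const.sub (χ.contDiffAt (n := 1))
      have h2 : ContDiffAt ℝ 1 (fun y : EuclideanSpace ℝ (Fin n) => (inner ℝ y y : ℝ) ^ (-α)) x := by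
        have hinner : ContDiffAt ℝ 1 (fun y : EuclideanSpace ℝ (Fin n) => (inner ℝ y y : ℝ)) x :=
          (contDiff_id.inner ℝ contDiff_id).contDiffAt
        exact hinner.rpow_const_of_ne ((inner_self_ne_zero (𝕜 := ℝ)).2 hx0)
      exact h1.mul h2
  -- Euler identity for W on the support region
  have hWeuler : ∀ x : EuclideanSpace ℝ (Fin n), 2*δ/3 < ‖x‖ →
      fderiv ℝ W x x = (-2*α) * W x := by
    intro x hx
    have hx0 : x ≠ 0 := by
      intro h; rw [h] at hx; simp at hx; linarith
    have hne : (inner ℝ x x : ℝ) ≠ 0 := (inner_self_ne_zero (𝕜 := ℝ)).2 hx0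
    have hNd : DifferentiableAt ℝ (fun y : EuclideanSpace ℝ (Fin n) => (inner ℝ y y : ℝ)) x :=
      differentiableAt_id.inner ℝ differentiableAt_id
    have hwf : HasFDerivAt (fun y : EuclideanSpace ℝ (Fin n) => (inner ℝ y y : ℝ) ^ (-α))
        ((-α * (inner ℝ x x : ℝ) ^ (-α - 1)) •
          fderiv ℝ (fun y : EuclideanSpace ℝ (Fin n) => (inner ℝ y y : ℝ)) x) x := by
      have h := HasDerivAt.comp_hasFDerivAt
        (f := fun y : EuclideanSpace ℝ (Fin n) => (inner ℝ y y : ℝ)) x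
        (Real.hasDerivAt_rpow_const (x := (inner ℝ x x : ℝ)) (p := -α) (Or.inl hne))
        hNd.hasFDerivAt
      exact h
    have hopen : IsOpen {y : EuclideanSpace ℝ (Fin n) | 2*δ/3 < ‖y‖} :=
      isOpen_lt continuous_const continuous_norm
    have hev : W =ᶠ[nhds x] (fun y => (inner ℝ y y : ℝ) ^ (-α)) := by
      filter_upwards [hopen.mem_nhds hx] with y hy
      rw [hWdef]
      simp only [hχ0 y (le_of_lt hy), sub_zero, one_mul]
    rw [hev.fderiv_eq, hwf.fderiv]
    have hfd : fderiv ℝ (fun y : EuclideanSpace ℝ (Fin n) => (inner ℝ y y : ℝ)) x x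
        = 2 * (inner ℝ x x : ℝ) := by
      rw [fderiv_inner_apply ℝ differentiableAt_fun_id differentiableAt_fun_id]
      simp only [fderiv_id', ContinuousLinearMap.coe_id', id_eq]
      rw [real_inner_comm]; ring
    rw [ContinuousLinearMap.smul_apply, hfd]
    have hWx : W x = (inner ℝ x x : ℝ) ^ (-α) := by
      rw [hWdef]; simp only [hχ0 x (le_of_lt hx), sub_zero, one_mul]
    have hstep : (inner ℝ x x : ℝ) ^ (-α - 1) * (inner ℝ x x : ℝ) = (inner ℝ x x : ℝ) ^ (-α) := by
      rw [← Real.rpow_add_one hne]; ring_nf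
    rw [hWx]
    simp only [smul_eq_mul]
    calc -α * (inner ℝ x x:ℝ) ^ (-α - 1) * (2 * (inner ℝ x x:ℝ))
        = -2*α * ((inner ℝ x x:ℝ) ^ (-α - 1) * (inner ℝ x x:ℝ)) := by ring
      _ = -2*α * (inner ℝ x x:ℝ) ^ (-α) := by rw [hstep]
  -- real and imaginary parts
  set u : EuclideanSpace ℝ (Fin n) → ℝ := fun x => (f x).re with hu
  set v : EuclideanSpace ℝ (Fin n) → ℝ := fun x => (f x).im with hv
  have hfd : Differentiable ℝ f := hf.differentiable (by simp)
  have hud : ∀ x, HasFDerivAt u (Complex.reCLM.comp (fderiv ℝ f x)) x := by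
    intro x
    have h := (Complex.reCLM.hasFDerivAt (x := f x)).comp x (hfd x).hasFDerivAt
    simpa only [Function.comp_def, Complex.reCLM_apply] using h
  have hvd : ∀ x, HasFDerivAt v (Complex.imCLM.comp (fderiv ℝ f x)) x := by
    intro x
    have h := (Complex.imCLM.hasFDerivAt (x := f x)).comp x (hfd x).hasFDerivAt
    simpa only [Function.comp_def, Complex.imCLM_apply] using h
  set φ : EuclideanSpace ℝ (Fin n) → ℝ := fun x => u x * u x + v x * v x with hφdef
  have husm : ContDiff ℝ 1 u := Complex.reCLM.contDiff.comp (hf.of_le (by simp))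
  have hvsm : ContDiff ℝ 1 v := Complex.imCLM.contDiff.comp (hf.of_le (by simp))
  have hφsm : ContDiff ℝ 1 φ := (husm.mul husm).add (hvsm.mul hvsm)
  have hφc : HasCompactSupport φ := by
    apply HasCompactSupport.intro hfc
    intro x hx
    have : f x = 0 := image_eq_zero_of_notMem_tsupport hx
    simp [hφdef, hu, hv, this]
  -- derivative of φ in direction x
  have hφder : ∀ x, fderiv ℝ φ x x
      = 2 * (u x * (eulerOp f x).re + v x * (eulerOp f x).im) := by
    intro x
    have h : fderiv ℝ φ x = _ := (((hud x).mul (hud x)).add ((hvd x).mul (hvd x))).fderiv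
    rw [h]
    simp only [ContinuousLinearMap.add_apply, ContinuousLinearMap.coe_smul', Pi.smul_apply,
      ContinuousLinearMap.coe_comp', Function.comp_apply, Complex.reCLM_apply,
      Complex.imCLM_apply, smul_eq_mul]
    show u x * (fderiv ℝ f x x).re + u x * (fderiv ℝ f x x).re
        + (v x * (fderiv ℝ f x x).im + v x * (fderiv ℝ f x x).im)
      = 2 * (u x * (eulerOp f x).re + v x * (eulerOp f x).im)
    rw [show eulerOp f x = fderiv ℝ f x x from rfl]
    ring
  -- the weight equality on integrands supported in tsupport f
  have hweight : ∀ (A : EuclideanSpace ℝ (Fin n) → ℝ), (∀ x, x ∉ tsupport f → A x = 0) →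
      (∫ x, ‖x‖ ^ (-(2:ℝ) * α) * A x) = ∫ x, W x * A x := by
    intro A hA
    apply integral_congr_ae
    filter_upwards with x
    by_cases hx : x ∈ tsupport f
    · rw [hWeq x (by linarith [hsupp_norm x hx])]
    · rw [hA x hx]; ring
  -- zero off support
  have hEf0 : ∀ x, x ∉ tsupport f → eulerOp f x = 0 := by
    intro x hx
    rw [show eulerOp f x = fderiv ℝ f x x from rfl, fderiv_of_notMem_tsupport ℝ hx]
    rfl
  have hf0' : ∀ x, x ∉ tsupport f → f x = 0 := fun x hx => image_eq_zero_of_notMem_tsupport hx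
  -- apply the core divergence identity
  have hWφ : ∀ x, fderiv ℝ W x x * φ x = (-2*α) * (W x * φ x) := by
    intro x
    by_cases hx : x ∈ tsupport f
    · rw [hWeuler x (by linarith [hsupp_norm x hx])]; ring
    · have : φ x = 0 := by simp [hφdef, hu, hv, hf0' x hx]
      rw [this]; ring
  have hJ : ∫ x, W x * fderiv ℝ φ x x = (-(n:ℝ) + 2*α) * ∫ x, W x * φ x :=
    core_divergence α hWsmooth hφsm hφc hWφ
  -- continuity facts
  have hWc : Continuous W := hWsmooth.continuous
  have hEfc : Continuous (eulerOp f) := by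
    rw [show eulerOp f = fun x => fderiv ℝ f x x from rfl]
    exact ((hf.of_le (by simp) : ContDiff ℝ 1 f).continuous_fderiv one_ne_zero).clm_apply continuous_id
  have hfcont : Continuous f := hf.continuous
  -- integrability of the three pieces
  have hint1 : Integrable (fun x => W x * ‖eulerOp f x‖ ^ 2) := by
    apply Continuous.integrable_of_hasCompactSupport
    · exact hWc.mul ((hEfc.norm).pow 2)
    · apply HasCompactSupport.intro hfc
      intro x hx
      simp [hEf0 x hx]
  have hint2 : Integrable (fun x => W x * ‖f x‖ ^ 2) := by
    apply Continuous.integrable_of_hasCompactSupport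
    · exact hWc.mul ((hfcont.norm).pow 2)
    · apply HasCompactSupport.intro hfc
      intro x hx
      simp [hf0' x hx]
  have hintJ : Integrable (fun x => W x * fderiv ℝ φ x x) := by
    apply Continuous.integrable_of_hasCompactSupport
    · exact hWc.mul ((hφsm.continuous_fderiv one_ne_zero).clm_apply continuous_id)
    · apply HasCompactSupport.intro hfc
      intro x hx
      have hts : tsupport φ ⊆ tsupport f := by
        apply closure_minimal _ (isClosed_tsupport f)
        intro y hy
        by_contra hyn
        exact hy (by simp [hφdef, hu, hv, hf0' y hyn])
      rw [fderiv_of_notMem_tsupport ℝ (fun hmem => hx (hts hmem))]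
      simp
  have hsq : ∀ z : ℂ, ‖z‖ ^ 2 = z.re * z.re + z.im * z.im := by
    intro z
    rw [← Complex.normSq_apply, Complex.normSq_eq_norm_sq]
  have hφnorm : (∫ x, W x * φ x) = ∫ x, W x * ‖f x‖ ^ 2 := by
    apply integral_congr_ae
    filter_upwards with x
    have hx : φ x = ‖f x‖ ^ 2 := by rw [hsq (f x)]
    rw [hx]
  rw [hφnorm] at hJ
  -- pointwise expansion of the third integrand
  have hptw : ∀ x, W x * ‖eulerOp f x + (c : ℂ) * f x‖ ^ 2
      = W x * ‖eulerOp f x‖ ^ 2 + c * (W x * fderiv ℝ φ x x) + c ^ 2 * (W x * ‖f x‖ ^ 2) := by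
    intro x
    rw [hsq, hsq, hsq, hφder x]
    simp only [Complex.add_re, Complex.add_im, Complex.mul_re, Complex.mul_im,
      Complex.ofReal_re, Complex.ofReal_im, hu, hv]
    ring
  -- expand the third integral
  have hI3 : ∫ x, W x * ‖eulerOp f x + (c : ℂ) * f x‖ ^ 2
      = (∫ x, W x * ‖eulerOp f x‖ ^ 2) + c * (∫ x, W x * fderiv ℝ φ x x)
        + c ^ 2 * (∫ x, W x * ‖f x‖ ^ 2) := by
    have : (fun x => W x * ‖eulerOp f x + (c : ℂ) * f x‖ ^ 2)
        = fun x => W x * ‖eulerOp f x‖ ^ 2 + c * (W x * fderiv ℝ φ x x)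
          + c ^ 2 * (W x * ‖f x‖ ^ 2) := funext hptw
    have hAB : Integrable (fun x => W x * ‖eulerOp f x‖ ^ 2 + c * (W x * fderiv ℝ φ x x)) :=
      hint1.add (hintJ.const_mul c)
    have hC : Integrable (fun x => c ^ 2 * (W x * ‖f x‖ ^ 2)) := hint2.const_mul (c^2)
    have hB : Integrable (fun x => c * (W x * fderiv ℝ φ x x)) := hintJ.const_mul c
    rw [this, integral_add hAB hC, integral_add hint1 hB, integral_const_mul, integral_const_mul]
  -- rewrite the statement's integrals with the smoothed weight
  rw [hweight (fun x => ‖eulerOp f x‖ ^ 2) (fun x hx => by simp [hEf0 x hx]),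
    hweight (fun x => ‖f x‖ ^ 2) (fun x hx => by simp [hf0' x hx]),
    hweight (fun x => ‖eulerOp f x + (c : ℂ) * f x‖ ^ 2)
      (fun x hx => by simp [hEf0 x hx, hf0' x hx]),
    hI3]
  have hcsq : ((n:ℝ)/2 - α)^2 = c^2 := by rw [hc]; ring
  rw [hcsq]
  linear_combination (-(((n:ℝ) - 2*α)/2) : ℝ) * hJ
end

section
/- Let 1 < p < ∞ and α ∈ ℝ with α p ≠ n. For every complex-valued f ∈ C_0^∞(ℝⁿ \ {0}), the weighted L^p inequality ‖ |x|^{−α} f ‖_{L^p(ℝⁿ)} ≤ |p/(n − α p)| · ‖ |x|^{−α} E f ‖_{L^p(ℝⁿ)} holds, where E f(x) = x·∇f(x). -/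
open MeasureTheory Real

set_option maxHeartbeats 2000000 in
/-- For `1 < p < ∞`, `α ∈ ℝ` with `αp ≠ n`, and `f ∈ C₀^∞(ℝⁿ \ {0})`:
`‖|x|^{-α} f‖_{L^p} ≤ |p/(n - αp)| ‖|x|^{-α} E f‖_{L^p}`. -/
theorem euler_weighted_Lp_sobolev {n : ℕ} (p α : ℝ) (hp : 1 < p)
    (hαp : α * p ≠ (n : ℝ)) (f : EuclideanSpace ℝ (Fin n) → ℂ)
    (hf : ContDiff ℝ (⊤ : ℕ∞) f) (hfc : HasCompactSupport f)
    (hf0 : (0 : EuclideanSpace ℝ (Fin n)) ∉ tsupport f) :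
    (∫ x, ‖x‖ ^ (-α * p) * ‖f x‖ ^ p) ^ (1 / p) ≤
      |p / ((n : ℝ) - α * p)| *
        (∫ x, ‖x‖ ^ (-α * p) * ‖eulerOp f x‖ ^ p) ^ (1 / p) := by
  classical
  have hp0 : (0:ℝ) < p := zero_lt_one.trans hp
  have hp1 : p ≠ 0 := hp0.ne'
  have hq : p.HolderConjugate (p / (p - 1)) := Real.HolderConjugate.conjExponent hp
  set q : ℝ := p / (p - 1) with hqdef
  have hq0 : q ≠ 0 := hq.symm.ne_zero
  set β : ℝ := -α * p with hβdef
  have hne : (n:ℝ) - α * p ≠ 0 := sub_ne_zero_of_ne (Ne.symm hαp)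
  -- a ball around the origin where f vanishes
  obtain ⟨ε, εpos, hball⟩ :=
    Metric.isOpen_iff.mp (isClosed_tsupport f).isOpen_compl 0 hf0
  have hf_ball : ∀ y ∈ Metric.ball (0 : EuclideanSpace ℝ (Fin n)) ε, f y = 0 :=
    fun y hy => image_eq_zero_of_notMem_tsupport (hball hy)
  have hf1 : ContDiff ℝ 1 f := hf.of_le (by simp)
  have hfd : Differentiable ℝ f := hf1.differentiable one_ne_zero
  have hf'cont : Continuous (fderiv ℝ f) := (contDiff_one_iff_fderiv.mp hf1).2
  have hgC1 : ContDiff ℝ 1 (fun x : EuclideanSpace ℝ (Fin n) => ‖f x‖ ^ p) := hf1.norm_rpow hp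
  have hgd : Differentiable ℝ (fun x : EuclideanSpace ℝ (Fin n) => ‖f x‖ ^ p) :=
    hgC1.differentiable one_ne_zero
  have hg'cont : Continuous (fderiv ℝ (fun x : EuclideanSpace ℝ (Fin n) => ‖f x‖ ^ p)) :=
    (contDiff_one_iff_fderiv.mp hgC1).2
  -- eventually-zero facts
  have hf_ev : ∀ x : EuclideanSpace ℝ (Fin n),
      (x ∈ Metric.ball (0 : EuclideanSpace ℝ (Fin n)) ε ∨ x ∉ tsupport f) →
      f =ᶠ[nhds x] (fun _ => (0:ℂ)) := by
    intro x hx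
    rcases hx with hx | hx
    · filter_upwards [Metric.isOpen_ball.mem_nhds hx] with y hy using hf_ball y hy
    · filter_upwards [(isClosed_tsupport f).isOpen_compl.mem_nhds hx] with y hy using
        image_eq_zero_of_notMem_tsupport hy
  have hg_ev : ∀ x : EuclideanSpace ℝ (Fin n),
      (x ∈ Metric.ball (0 : EuclideanSpace ℝ (Fin n)) ε ∨ x ∉ tsupport f) →
      (fun y : EuclideanSpace ℝ (Fin n) => ‖f y‖ ^ p) =ᶠ[nhds x] (fun _ => (0:ℝ)) := by
    intro x hx
    filter_upwards [hf_ev x hx] with y hy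
    simp only [hy, norm_zero]
    exact Real.zero_rpow hp1
  have hf'0 : ∀ x : EuclideanSpace ℝ (Fin n),
      (x ∈ Metric.ball (0 : EuclideanSpace ℝ (Fin n)) ε ∨ x ∉ tsupport f) →
      fderiv ℝ f x = 0 := by
    intro x hx
    rw [(hf_ev x hx).fderiv_eq]
    exact fderiv_const_apply 0
  have hg'0 : ∀ x : EuclideanSpace ℝ (Fin n),
      (x ∈ Metric.ball (0 : EuclideanSpace ℝ (Fin n)) ε ∨ x ∉ tsupport f) →
      fderiv ℝ (fun y : EuclideanSpace ℝ (Fin n) => ‖f y‖ ^ p) x = 0 := by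
    intro x hx
    rw [(hg_ev x hx).fderiv_eq]
    exact fderiv_const_apply 0
  have hg_ball : ∀ y ∈ Metric.ball (0 : EuclideanSpace ℝ (Fin n)) ε, ‖f y‖ ^ p = 0 := by
    intro y hy; rw [hf_ball y hy, norm_zero, Real.zero_rpow hp1]
  have hg_supp : ∀ x ∉ tsupport f, ‖f x‖ ^ p = 0 := by
    intro x hx; rw [image_eq_zero_of_notMem_tsupport hx, norm_zero, Real.zero_rpow hp1]
  -- derivative of the weight away from 0
  have hW : ∀ x : EuclideanSpace ℝ (Fin n), x ≠ 0 →
      HasFDerivAt (fun y : EuclideanSpace ℝ (Fin n) => ‖y‖ ^ β)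
        ((β * ‖x‖ ^ (β - 2)) • innerSL ℝ x) x := by
    intro x hx
    have hx2 : ‖x‖ ^ 2 ≠ 0 := pow_ne_zero _ (norm_ne_zero_iff.mpr hx)
    have h := ((hasStrictFDerivAt_norm_sq x).rpow_const (p := β/2) (Or.inl hx2)).hasFDerivAt
    have hfun : (fun y : EuclideanSpace ℝ (Fin n) => (‖y‖ ^ 2 : ℝ) ^ (β/2))
        = fun y : EuclideanSpace ℝ (Fin n) => ‖y‖ ^ β := by
      funext y
      rw [← Real.rpow_natCast ‖y‖ 2, ← Real.rpow_mul (norm_nonneg y)]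
      congr 1
      push_cast; ring
    have h1 : ((‖x‖ ^ 2 : ℝ)) ^ (β/2 - 1) = ‖x‖ ^ (β - 2) := by
      rw [← Real.rpow_natCast ‖x‖ 2, ← Real.rpow_mul (norm_nonneg x)]
      congr 1
      push_cast; ring
    have hder : ((β/2) * (‖x‖ ^ 2 : ℝ) ^ (β/2 - 1)) • (2 • innerSL ℝ x)
        = (β * ‖x‖ ^ (β - 2)) • innerSL ℝ x := by
      rw [h1, ← Nat.cast_smul_eq_nsmul ℝ 2 (innerSL ℝ x), smul_smul]
      congr 1
      push_cast; ring
    rw [hfun, hder] at h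
    exact h
  -- the candidate total derivative of the integrand c = w * g
  set C' : EuclideanSpace ℝ (Fin n) → (EuclideanSpace ℝ (Fin n) →L[ℝ] ℝ) := fun x =>
    (‖f x‖ ^ p) • ((β * ‖x‖ ^ (β - 2)) • innerSL ℝ x)
      + (‖x‖ ^ β) • fderiv ℝ (fun y : EuclideanSpace ℝ (Fin n) => ‖f y‖ ^ p) x with hC'def
  have hC'ball : ∀ x ∈ Metric.ball (0 : EuclideanSpace ℝ (Fin n)) ε, C' x = 0 := by
    intro x hx
    rw [hC'def]
    simp only
    rw [hg'0 x (Or.inl hx), hg_ball x hx]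
    simp
  have hC'supp : ∀ x ∉ tsupport f, C' x = 0 := by
    intro x hx
    rw [hC'def]
    simp only
    rw [hg'0 x (Or.inr hx), hg_supp x hx]
    simp
  have hC : ∀ x : EuclideanSpace ℝ (Fin n),
      HasFDerivAt (fun y : EuclideanSpace ℝ (Fin n) => ‖y‖ ^ β * ‖f y‖ ^ p) (C' x) x := by
    intro x
    by_cases hx : x = 0
    · subst hx
      have h0 : (fun y : EuclideanSpace ℝ (Fin n) => ‖y‖ ^ β * ‖f y‖ ^ p)
          =ᶠ[nhds (0 : EuclideanSpace ℝ (Fin n))] (fun _ => (0:ℝ)) := by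
        filter_upwards [Metric.isOpen_ball.mem_nhds (Metric.mem_ball_self εpos)] with y hy
        rw [hg_ball y hy, mul_zero]
      have hcst : HasFDerivAt (fun _ : EuclideanSpace ℝ (Fin n) => (0:ℝ))
          (0 : EuclideanSpace ℝ (Fin n) →L[ℝ] ℝ) 0 := hasFDerivAt_const _ _
      have h := hcst.congr_of_eventuallyEq h0
      rwa [hC'ball 0 (Metric.mem_ball_self εpos)]
    · have h := (hW x hx).mul ((hgd x).hasFDerivAt)
      rw [hC'def]
      exact h.congr_fderiv (add_comm _ _)
  -- continuity of C'
  have hC'cont : Continuous C' := by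
    rw [continuous_iff_continuousAt]
    intro x
    by_cases hx : x = 0
    · subst hx
      have h0 : C' =ᶠ[nhds (0 : EuclideanSpace ℝ (Fin n))]
          (fun _ => (0 : EuclideanSpace ℝ (Fin n) →L[ℝ] ℝ)) := by
        filter_upwards [Metric.isOpen_ball.mem_nhds (Metric.mem_ball_self εpos)] with y hy
        exact hC'ball y hy
      exact h0.continuousAt
    · have h1 : ContinuousAt (fun y : EuclideanSpace ℝ (Fin n) => ‖y‖ ^ (β - 2)) x :=
        (Real.continuousAt_rpow_const _ _ (Or.inl (norm_ne_zero_iff.mpr hx))).comp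
          continuous_norm.continuousAt
      have h2 : ContinuousAt (fun y : EuclideanSpace ℝ (Fin n) => ‖y‖ ^ β) x :=
        (Real.continuousAt_rpow_const _ _ (Or.inl (norm_ne_zero_iff.mpr hx))).comp
          continuous_norm.continuousAt
      rw [hC'def]
      exact ((hgC1.continuous.continuousAt).smul
        ((continuousAt_const.mul h1).smul (innerSL ℝ).continuous.continuousAt)).add
        (h2.smul hg'cont.continuousAt)
  -- continuity and compact support helpers
  have contMul : ∀ (γ : ℝ) (h : EuclideanSpace ℝ (Fin n) → ℝ), Continuous h →
      (∀ y ∈ Metric.ball (0 : EuclideanSpace ℝ (Fin n)) ε, h y = 0) →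
      Continuous fun x : EuclideanSpace ℝ (Fin n) => ‖x‖ ^ γ * h x := by
    intro γ h hc h0
    rw [continuous_iff_continuousAt]
    intro x
    by_cases hx : x = 0
    · subst hx
      have hev : (fun x : EuclideanSpace ℝ (Fin n) => ‖x‖ ^ γ * h x)
          =ᶠ[nhds (0 : EuclideanSpace ℝ (Fin n))] (fun _ => (0:ℝ)) := by
        filter_upwards [Metric.isOpen_ball.mem_nhds (Metric.mem_ball_self εpos)] with y hy
        rw [h0 y hy, mul_zero]
      exact hev.continuousAt
    · exact (((Real.continuousAt_rpow_const _ _ (Or.inl (norm_ne_zero_iff.mpr hx))).comp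
        continuous_norm.continuousAt).mul hc.continuousAt)
  have suppMul : ∀ (γ : ℝ) (h : EuclideanSpace ℝ (Fin n) → ℝ), (∀ x ∉ tsupport f, h x = 0) →
      HasCompactSupport fun x : EuclideanSpace ℝ (Fin n) => ‖x‖ ^ γ * h x := by
    intro γ h h0
    apply HasCompactSupport.intro hfc
    intro x hx
    rw [h0 x hx, mul_zero]
  -- integrability of the various integrands
  have int_c : Integrable (fun x : EuclideanSpace ℝ (Fin n) => ‖x‖ ^ β * ‖f x‖ ^ p) volume :=
    (contMul β _ hgC1.continuous hg_ball).integrable_of_hasCompactSupport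
      (suppMul β _ hg_supp)
  have hDcont : Continuous (fun x : EuclideanSpace ℝ (Fin n) =>
      fderiv ℝ (fun y : EuclideanSpace ℝ (Fin n) => ‖f y‖ ^ p) x x) :=
    hg'cont.clm_apply continuous_id
  have hDball : ∀ y ∈ Metric.ball (0 : EuclideanSpace ℝ (Fin n)) ε,
      fderiv ℝ (fun y : EuclideanSpace ℝ (Fin n) => ‖f y‖ ^ p) y y = 0 := by
    intro y hy; rw [hg'0 y (Or.inl hy)]; rfl
  have hDsupp : ∀ x ∉ tsupport f,
      fderiv ℝ (fun y : EuclideanSpace ℝ (Fin n) => ‖f y‖ ^ p) x x = 0 := by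
    intro x hx; rw [hg'0 x (Or.inr hx)]; rfl
  have int_wD : Integrable (fun x : EuclideanSpace ℝ (Fin n) =>
      ‖x‖ ^ β * fderiv ℝ (fun y : EuclideanSpace ℝ (Fin n) => ‖f y‖ ^ p) x x) volume :=
    (contMul β _ hDcont hDball).integrable_of_hasCompactSupport (suppMul β _ hDsupp)
  have hEcont : Continuous (fun x : EuclideanSpace ℝ (Fin n) => eulerOp f x) := by
    simp only [eulerOp]
    exact hf'cont.clm_apply continuous_id
  have hE_ball : ∀ y ∈ Metric.ball (0 : EuclideanSpace ℝ (Fin n)) ε, eulerOp f y = 0 := by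
    intro y hy; simp only [eulerOp]; rw [hf'0 y (Or.inl hy)]; rfl
  have hE_supp : ∀ x ∉ tsupport f, eulerOp f x = 0 := by
    intro x hx; simp only [eulerOp]; rw [hf'0 x (Or.inr hx)]; rfl
  have hEpcont : Continuous (fun x : EuclideanSpace ℝ (Fin n) => ‖eulerOp f x‖ ^ p) := by
    rw [continuous_iff_continuousAt]
    intro x
    exact (Real.continuousAt_rpow_const _ _ (Or.inr hp0.le)).comp hEcont.norm.continuousAt
  have int_wEp : Integrable (fun x : EuclideanSpace ℝ (Fin n) =>
      ‖x‖ ^ β * ‖eulerOp f x‖ ^ p) volume := by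
    refine (contMul β _ hEpcont ?_).integrable_of_hasCompactSupport (suppMul β _ ?_)
    · intro y hy; rw [hE_ball y hy, norm_zero, Real.zero_rpow hp1]
    · intro x hx; rw [hE_supp x hx, norm_zero, Real.zero_rpow hp1]
  -- the components for Hölder
  have hfp1cont : Continuous (fun x : EuclideanSpace ℝ (Fin n) => ‖f x‖ ^ (p-1)) := by
    rw [continuous_iff_continuousAt]
    intro x
    exact (Real.continuousAt_rpow_const _ _ (Or.inr (by linarith))).comp
      (hf1.continuous.norm.continuousAt)
  have hφcont : Continuous (fun x : EuclideanSpace ℝ (Fin n) => ‖x‖ ^ (β/q) * ‖f x‖ ^ (p-1)) := by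
    refine contMul (β/q) _ hfp1cont ?_
    intro y hy; rw [hf_ball y hy, norm_zero, Real.zero_rpow (by intro h; exact hp.ne' (by linarith))]
  have hφsupp : HasCompactSupport
      (fun x : EuclideanSpace ℝ (Fin n) => ‖x‖ ^ (β/q) * ‖f x‖ ^ (p-1)) := by
    refine suppMul (β/q) _ ?_
    intro x hx
    rw [image_eq_zero_of_notMem_tsupport hx, norm_zero,
      Real.zero_rpow (by intro h; exact hp.ne' (by linarith))]
  have hψcont : Continuous (fun x : EuclideanSpace ℝ (Fin n) => ‖x‖ ^ (β/p) * ‖eulerOp f x‖) := by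
    refine contMul (β/p) _ hEcont.norm ?_
    intro y hy; rw [hE_ball y hy, norm_zero]
  have hψsupp : HasCompactSupport
      (fun x : EuclideanSpace ℝ (Fin n) => ‖x‖ ^ (β/p) * ‖eulerOp f x‖) := by
    refine suppMul (β/p) _ ?_
    intro x hx; rw [hE_supp x hx, norm_zero]
  have int_φψ : Integrable (fun x : EuclideanSpace ℝ (Fin n) =>
      (‖x‖ ^ (β/q) * ‖f x‖ ^ (p-1)) * (‖x‖ ^ (β/p) * ‖eulerOp f x‖)) volume :=
    (hφcont.mul hψcont).integrable_of_hasCompactSupport (hφsupp.mul_right)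
  -- projections
  have hproj_cont : ∀ i : Fin n, Continuous fun x : EuclideanSpace ℝ (Fin n) => x i := by
    intro i
    exact (EuclideanSpace.proj (𝕜 := ℝ) i).continuous
  have int_i1 : ∀ i : Fin n, Integrable (fun x : EuclideanSpace ℝ (Fin n) =>
      x i * (‖x‖ ^ β * ‖f x‖ ^ p)) volume := by
    intro i
    refine ((hproj_cont i).mul (contMul β _ hgC1.continuous hg_ball)).integrable_of_hasCompactSupport ?_
    apply HasCompactSupport.intro hfc
    intro x hx
    show x i * (‖x‖ ^ β * ‖f x‖ ^ p) = 0
    rw [hg_supp x hx, mul_zero, mul_zero]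
  have int_i2 : ∀ i : Fin n, Integrable (fun x : EuclideanSpace ℝ (Fin n) =>
      x i * C' x (EuclideanSpace.single i (1:ℝ))) volume := by
    intro i
    refine ((hproj_cont i).mul (hC'cont.clm_apply continuous_const)).integrable_of_hasCompactSupport ?_
    apply HasCompactSupport.intro hfc
    intro x hx
    show x i * C' x (EuclideanSpace.single i (1:ℝ)) = 0
    rw [hC'supp x hx]
    simp
  -- integration by parts in each coordinate direction
  have hkey : ∀ i : Fin n,
      (∫ x : EuclideanSpace ℝ (Fin n), x i * C' x (EuclideanSpace.single i (1:ℝ)))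
        = - ∫ x : EuclideanSpace ℝ (Fin n), ‖x‖ ^ β * ‖f x‖ ^ p := by
    intro i
    have hproj : ∀ x : EuclideanSpace ℝ (Fin n),
        HasFDerivAt (fun y : EuclideanSpace ℝ (Fin n) => y i)
          (EuclideanSpace.proj (𝕜 := ℝ) i) x := by
      intro x
      exact (EuclideanSpace.proj (𝕜 := ℝ) i).hasFDerivAt
    have h := integral_bilinear_hasFDerivAt_right_eq_neg_left_of_integrable
      (μ := (volume : Measure (EuclideanSpace ℝ (Fin n))))
      (B := ContinuousLinearMap.mul ℝ ℝ) (v := EuclideanSpace.single i (1:ℝ))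
      (f := fun x : EuclideanSpace ℝ (Fin n) => x i)
      (f' := fun _ => EuclideanSpace.proj (𝕜 := ℝ) i)
      (g := fun x : EuclideanSpace ℝ (Fin n) => ‖x‖ ^ β * ‖f x‖ ^ p)
      (g' := C') ?_ ?_ ?_ (fun x _ => hproj x) (fun x _ => hC x)
    · have hpr : (EuclideanSpace.proj (𝕜 := ℝ) i) (EuclideanSpace.single i (1:ℝ)) = 1 := by
        simp
      simpa [ContinuousLinearMap.mul_apply', hpr] using h
    · have hpr : (EuclideanSpace.proj (𝕜 := ℝ) i) (EuclideanSpace.single i (1:ℝ)) = 1 := by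
        simp
      simpa [ContinuousLinearMap.mul_apply', hpr] using int_c
    · simpa [ContinuousLinearMap.mul_apply'] using int_i2 i
    · simpa [ContinuousLinearMap.mul_apply'] using int_i1 i
  -- summing up: the divergence identity
  have hrep : ∀ x : EuclideanSpace ℝ (Fin n),
      C' x x = ∑ i : Fin n, x i * C' x (EuclideanSpace.single i (1:ℝ)) := by
    intro x
    have hb := (EuclideanSpace.basisFun (Fin n) ℝ).sum_repr x
    have hx0 : C' x x = (C' x) (∑ i : Fin n,
        (EuclideanSpace.basisFun (Fin n) ℝ).repr x i • (EuclideanSpace.basisFun (Fin n) ℝ) i) := by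
      rw [hb]
    rw [hx0, map_sum]
    refine Finset.sum_congr rfl fun i _ => ?_
    rw [EuclideanSpace.basisFun_repr, EuclideanSpace.basisFun_apply, (C' x).map_smul,
      smul_eq_mul]
  have hsum : (∫ x : EuclideanSpace ℝ (Fin n), C' x x)
      = -(n : ℝ) * ∫ x : EuclideanSpace ℝ (Fin n), ‖x‖ ^ β * ‖f x‖ ^ p := by
    calc (∫ x : EuclideanSpace ℝ (Fin n), C' x x)
        = ∫ x : EuclideanSpace ℝ (Fin n),
            ∑ i : Fin n, x i * C' x (EuclideanSpace.single i (1:ℝ)) := by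
          simp_rw [hrep]
      _ = ∑ i : Fin n, ∫ x : EuclideanSpace ℝ (Fin n),
            x i * C' x (EuclideanSpace.single i (1:ℝ)) :=
          integral_finset_sum _ (fun i _ => int_i2 i)
      _ = ∑ _i : Fin n, (- ∫ x : EuclideanSpace ℝ (Fin n), ‖x‖ ^ β * ‖f x‖ ^ p) :=
          Finset.sum_congr rfl fun i _ => hkey i
      _ = -(n : ℝ) * ∫ x : EuclideanSpace ℝ (Fin n), ‖x‖ ^ β * ‖f x‖ ^ p := by
          rw [Finset.sum_const, Finset.card_univ, Fintype.card_fin, nsmul_eq_mul]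
          ring
  -- pointwise computation of the divergence
  have hC'0 : C' 0 = 0 := hC'ball 0 (Metric.mem_ball_self εpos)
  have hdiv : ∀ x : EuclideanSpace ℝ (Fin n),
      C' x x = β * (‖x‖ ^ β * ‖f x‖ ^ p)
        + ‖x‖ ^ β * fderiv ℝ (fun y : EuclideanSpace ℝ (Fin n) => ‖f y‖ ^ p) x x := by
    intro x
    by_cases hx : x = 0
    · subst hx
      rw [hC'0, hg'0 0 (Or.inl (Metric.mem_ball_self εpos)),
        hg_ball 0 (Metric.mem_ball_self εpos)]
      simp
    · have hnx : (0:ℝ) < ‖x‖ := norm_pos_iff.mpr hx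
      rw [hC'def]
      simp only [ContinuousLinearMap.add_apply, ContinuousLinearMap.smul_apply,
        innerSL_apply_apply, smul_eq_mul]
      rw [real_inner_self_eq_norm_mul_norm]
      have key : ‖x‖ ^ (β - 2) * (‖x‖ * ‖x‖) = ‖x‖ ^ β := by
        have h2 : ‖x‖ ^ (β - 2) * ‖x‖ = ‖x‖ ^ (β - 1) := by
          rw [← Real.rpow_add_one hnx.ne' (β - 2)]
          congr 1
          ring
        have h3 : ‖x‖ ^ (β - 1) * ‖x‖ = ‖x‖ ^ β := by
          rw [← Real.rpow_add_one hnx.ne' (β - 1)]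
          congr 1
          ring
        calc ‖x‖ ^ (β - 2) * (‖x‖ * ‖x‖) = (‖x‖ ^ (β - 2) * ‖x‖) * ‖x‖ := by ring
          _ = ‖x‖ ^ β := by rw [h2, h3]
      linear_combination (‖f x‖ ^ p * β) * key
  -- the integral identity
  have hid : ((n:ℝ) + β) * (∫ x : EuclideanSpace ℝ (Fin n), ‖x‖ ^ β * ‖f x‖ ^ p)
      = - ∫ x : EuclideanSpace ℝ (Fin n),
          ‖x‖ ^ β * fderiv ℝ (fun y : EuclideanSpace ℝ (Fin n) => ‖f y‖ ^ p) x x := by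
    have h1 : (∫ x : EuclideanSpace ℝ (Fin n), C' x x)
        = β * (∫ x : EuclideanSpace ℝ (Fin n), ‖x‖ ^ β * ‖f x‖ ^ p)
          + ∫ x : EuclideanSpace ℝ (Fin n),
            ‖x‖ ^ β * fderiv ℝ (fun y : EuclideanSpace ℝ (Fin n) => ‖f y‖ ^ p) x x := by
      simp_rw [hdiv]
      rw [integral_add (int_c.const_mul β) int_wD, integral_const_mul]
    rw [hsum] at h1
    linarith
  -- the pointwise bound on the divergence term
  have hbd : ∀ x : EuclideanSpace ℝ (Fin n),
      |‖x‖ ^ β * fderiv ℝ (fun y : EuclideanSpace ℝ (Fin n) => ‖f y‖ ^ p) x x|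
        ≤ p * ((‖x‖ ^ (β/q) * ‖f x‖ ^ (p-1)) * (‖x‖ ^ (β/p) * ‖eulerOp f x‖)) := by
    intro x
    by_cases hx : x = 0
    · subst hx
      rw [hg'0 0 (Or.inl (Metric.mem_ball_self εpos))]
      simp only [ContinuousLinearMap.zero_apply, mul_zero, abs_zero]
      positivity
    · have hnx : (0:ℝ) < ‖x‖ := norm_pos_iff.mpr hx
      have hw0 : (0:ℝ) ≤ ‖x‖ ^ β := Real.rpow_nonneg (norm_nonneg x) β
      rw [abs_mul, abs_of_nonneg hw0]
      have hD : |fderiv ℝ (fun y : EuclideanSpace ℝ (Fin n) => ‖f y‖ ^ p) x x|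
          ≤ p * (‖f x‖ ^ (p-1) * ‖eulerOp f x‖) := by
        rw [hfd.fderiv_norm_rpow hp]
        simp only [ContinuousLinearMap.smul_apply, ContinuousLinearMap.comp_apply,
          innerSL_apply_apply, smul_eq_mul]
        rw [abs_mul, abs_of_nonneg (show (0:ℝ) ≤ p * ‖f x‖ ^ (p-2) by positivity)]
        have h2 : |(inner ℝ (f x) (fderiv ℝ f x x) : ℝ)| ≤ ‖f x‖ * ‖fderiv ℝ f x x‖ :=
          abs_real_inner_le_norm _ _
        have h3 : ‖f x‖ ^ (p-2) * ‖f x‖ = ‖f x‖ ^ (p-1) := by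
          by_cases hfx : ‖f x‖ = 0
          · rw [hfx, mul_zero, Real.zero_rpow (show p - 1 ≠ 0 by intro h; exact hp.ne' (by linarith))]
          · rw [show p - 1 = (p - 2) + 1 by ring, Real.rpow_add_one hfx]
        calc p * ‖f x‖ ^ (p-2) * |(inner ℝ (f x) (fderiv ℝ f x x) : ℝ)|
            ≤ p * ‖f x‖ ^ (p-2) * (‖f x‖ * ‖fderiv ℝ f x x‖) := by
              apply mul_le_mul_of_nonneg_left h2 (by positivity)
          _ = p * (‖f x‖ ^ (p-1) * ‖fderiv ℝ f x x‖) := by rw [← h3]; ring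
          _ = p * (‖f x‖ ^ (p-1) * ‖eulerOp f x‖) := rfl
      have hsplit : ‖x‖ ^ β = ‖x‖ ^ (β/q) * ‖x‖ ^ (β/p) := by
        rw [← Real.rpow_add hnx]
        congr 1
        have hc := hq.inv_add_inv_eq_one
        rw [div_eq_mul_inv, div_eq_mul_inv, ← mul_add, add_comm q⁻¹ p⁻¹, hc, mul_one]
      calc ‖x‖ ^ β * |fderiv ℝ (fun y : EuclideanSpace ℝ (Fin n) => ‖f y‖ ^ p) x x|
          ≤ ‖x‖ ^ β * (p * (‖f x‖ ^ (p-1) * ‖eulerOp f x‖)) :=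
            mul_le_mul_of_nonneg_left hD hw0
        _ = p * ((‖x‖ ^ (β/q) * ‖f x‖ ^ (p-1)) * (‖x‖ ^ (β/p) * ‖eulerOp f x‖)) := by
            rw [hsplit]; ring
  -- put everything together
  have hAnn : (0:ℝ) ≤ ∫ x : EuclideanSpace ℝ (Fin n), ‖x‖ ^ β * ‖f x‖ ^ p :=
    integral_nonneg fun x => by positivity
  have hBnn : (0:ℝ) ≤ ∫ x : EuclideanSpace ℝ (Fin n), ‖x‖ ^ β * ‖eulerOp f x‖ ^ p :=
    integral_nonneg fun x => by positivity
  have habs : |(n:ℝ) + β| * (∫ x : EuclideanSpace ℝ (Fin n), ‖x‖ ^ β * ‖f x‖ ^ p)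
      ≤ p * ∫ x : EuclideanSpace ℝ (Fin n),
          (‖x‖ ^ (β/q) * ‖f x‖ ^ (p-1)) * (‖x‖ ^ (β/p) * ‖eulerOp f x‖) := by
    have habs1 : |∫ x : EuclideanSpace ℝ (Fin n),
          ‖x‖ ^ β * fderiv ℝ (fun y : EuclideanSpace ℝ (Fin n) => ‖f y‖ ^ p) x x|
        ≤ ∫ x : EuclideanSpace ℝ (Fin n),
          |‖x‖ ^ β * fderiv ℝ (fun y : EuclideanSpace ℝ (Fin n) => ‖f y‖ ^ p) x x| := by
      have hni := norm_integral_le_integral_norm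
        (μ := (volume : Measure (EuclideanSpace ℝ (Fin n))))
        (f := fun x : EuclideanSpace ℝ (Fin n) =>
          ‖x‖ ^ β * fderiv ℝ (fun y : EuclideanSpace ℝ (Fin n) => ‖f y‖ ^ p) x x)
      simpa only [Real.norm_eq_abs] using hni
    calc |(n:ℝ) + β| * (∫ x : EuclideanSpace ℝ (Fin n), ‖x‖ ^ β * ‖f x‖ ^ p)
        = |((n:ℝ) + β) * ∫ x : EuclideanSpace ℝ (Fin n), ‖x‖ ^ β * ‖f x‖ ^ p| := by
          rw [abs_mul, abs_of_nonneg hAnn]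
      _ = |∫ x : EuclideanSpace ℝ (Fin n),
            ‖x‖ ^ β * fderiv ℝ (fun y : EuclideanSpace ℝ (Fin n) => ‖f y‖ ^ p) x x| := by
          rw [hid, abs_neg]
      _ ≤ ∫ x : EuclideanSpace ℝ (Fin n),
            |‖x‖ ^ β * fderiv ℝ (fun y : EuclideanSpace ℝ (Fin n) => ‖f y‖ ^ p) x x| :=
          habs1
      _ ≤ ∫ x : EuclideanSpace ℝ (Fin n),
            p * ((‖x‖ ^ (β/q) * ‖f x‖ ^ (p-1)) * (‖x‖ ^ (β/p) * ‖eulerOp f x‖)) :=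
          integral_mono int_wD.abs (int_φψ.const_mul p) hbd
      _ = p * ∫ x : EuclideanSpace ℝ (Fin n),
            (‖x‖ ^ (β/q) * ‖f x‖ ^ (p-1)) * (‖x‖ ^ (β/p) * ‖eulerOp f x‖) :=
          integral_const_mul _ _
  -- Hölder
  have hhold : (∫ x : EuclideanSpace ℝ (Fin n),
        (‖x‖ ^ (β/q) * ‖f x‖ ^ (p-1)) * (‖x‖ ^ (β/p) * ‖eulerOp f x‖))
      ≤ (∫ x : EuclideanSpace ℝ (Fin n), (‖x‖ ^ (β/q) * ‖f x‖ ^ (p-1)) ^ q) ^ (1/q)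
        * (∫ x : EuclideanSpace ℝ (Fin n), (‖x‖ ^ (β/p) * ‖eulerOp f x‖) ^ p) ^ (1/p) := by
    refine integral_mul_le_Lp_mul_Lq_of_nonneg hq.symm ?_ ?_ ?_ ?_
    · exact Filter.Eventually.of_forall fun x => by positivity
    · exact Filter.Eventually.of_forall fun x => by positivity
    · exact hφcont.memLp_of_hasCompactSupport hφsupp
    · exact hψcont.memLp_of_hasCompactSupport hψsupp
  have hφq : ∀ x : EuclideanSpace ℝ (Fin n),
      (‖x‖ ^ (β/q) * ‖f x‖ ^ (p-1)) ^ q = ‖x‖ ^ β * ‖f x‖ ^ p := by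
    intro x
    rw [Real.mul_rpow (Real.rpow_nonneg (norm_nonneg x) _) (Real.rpow_nonneg (norm_nonneg _) _),
      ← Real.rpow_mul (norm_nonneg x), ← Real.rpow_mul (norm_nonneg (f x)),
      div_mul_cancel₀ β hq0, hq.sub_one_mul_conj]
  have hψp : ∀ x : EuclideanSpace ℝ (Fin n),
      (‖x‖ ^ (β/p) * ‖eulerOp f x‖) ^ p = ‖x‖ ^ β * ‖eulerOp f x‖ ^ p := by
    intro x
    rw [Real.mul_rpow (Real.rpow_nonneg (norm_nonneg x) _) (norm_nonneg _),
      ← Real.rpow_mul (norm_nonneg x), div_mul_cancel₀ β hp1]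
  simp_rw [hφq, hψp] at hhold
  -- final algebraic manipulations
  set A : ℝ := ∫ x : EuclideanSpace ℝ (Fin n), ‖x‖ ^ β * ‖f x‖ ^ p with hA
  set B : ℝ := ∫ x : EuclideanSpace ℝ (Fin n), ‖x‖ ^ β * ‖eulerOp f x‖ ^ p with hB
  have hnb : |(n:ℝ) + β| = |(n:ℝ) - α * p| := by rw [hβdef]; ring_nf
  have hmain : |(n:ℝ) - α * p| * A ≤ p * (A ^ (1/q) * B ^ (1/p)) := by
    rw [← hnb]
    calc |(n:ℝ) + β| * A ≤ p * ∫ x : EuclideanSpace ℝ (Fin n),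
          (‖x‖ ^ (β/q) * ‖f x‖ ^ (p-1)) * (‖x‖ ^ (β/p) * ‖eulerOp f x‖) := habs
      _ ≤ p * (A ^ (1/q) * B ^ (1/p)) := by
          apply mul_le_mul_of_nonneg_left hhold hp0.le
  have habspos : (0:ℝ) < |(n:ℝ) - α * p| := abs_pos.mpr hne
  rcases eq_or_lt_of_le hAnn with hA0 | hA0
  · rw [← hA0, Real.zero_rpow (one_div_ne_zero hp1)]
    exact mul_nonneg (abs_nonneg _) (Real.rpow_nonneg hBnn _)
  · have h1 : A ^ (1/q) * A ^ (1/p) = A := by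
      rw [← Real.rpow_add hA0]
      have hc := hq.inv_add_inv_eq_one
      rw [show 1/q + 1/p = 1 by rw [one_div, one_div]; linarith, Real.rpow_one]
    have hAq : (0:ℝ) < A ^ (1/q) := Real.rpow_pos_of_pos hA0 _
    have h2' : A ^ (1/q) * (|(n:ℝ) - α * p| * A ^ (1/p))
        ≤ A ^ (1/q) * (p * B ^ (1/p)) := by
      calc A ^ (1/q) * (|(n:ℝ) - α * p| * A ^ (1/p))
          = |(n:ℝ) - α * p| * (A ^ (1/q) * A ^ (1/p)) := by ring
        _ ≤ p * (A ^ (1/q) * B ^ (1/p)) := by rw [h1]; exact hmain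
        _ = A ^ (1/q) * (p * B ^ (1/p)) := by ring
    have h3 := le_of_mul_le_mul_left h2' hAq
    rw [abs_div, abs_of_pos hp0, div_mul_eq_mul_div, le_div_iff₀ habspos, mul_comm (A ^ (1/p))]
    exact h3
end

section
/- Let 1 < p < n. Then the Sobolev-type inequality ‖f‖_{L^p(ℝⁿ)} ≤ (p/n) ‖E f‖_{L^p(ℝⁿ)} for f ∈ C_0^∞(ℝⁿ \ {0}) implies the L^p Hardy inequality ‖ f/|x| ‖_{L^p(ℝⁿ)} ≤ (p/(n−p)) ‖ (x/|x|)·∇f ‖_{L^p(ℝⁿ)} for all f ∈ C_0^∞(ℝⁿ \ {0}). -/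
open MeasureTheory Real

/-- The radial derivative `R f (x) = (x/|x|)·∇f(x)`. -/
noncomputable def radialDeriv {n : ℕ} (g : EuclideanSpace ℝ (Fin n) → ℂ)
    (x : EuclideanSpace ℝ (Fin n)) : ℂ :=
  fderiv ℝ g x (‖x‖⁻¹ • x)

/-- The predicate `f ∈ C₀^∞(ℝⁿ \ {0})`. -/
def IsTestAwayZero {n : ℕ} (f : EuclideanSpace ℝ (Fin n) → ℂ) : Prop :=
  ContDiff ℝ (⊤ : ℕ∞) f ∧ HasCompactSupport f ∧ (0 : EuclideanSpace ℝ (Fin n)) ∉ tsupport f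

section Aux

variable {n : ℕ}

local notation "E" => EuclideanSpace ℝ (Fin n)

/-- Derivative of the norm on Euclidean space away from zero. -/
lemma hasFDerivAt_norm_aux {x : E} (hx : x ≠ 0) :
    HasFDerivAt (fun y : E => ‖y‖) (‖x‖⁻¹ • innerSL ℝ x) x := by
  have hnx : ‖x‖ ≠ 0 := norm_ne_zero_iff.2 hx
  have h1 : HasFDerivAt (fun y : E => ‖y‖ ^ 2) (2 • innerSL ℝ x) x :=
    (hasStrictFDerivAt_norm_sq x).hasFDerivAt
  have h2 := h1.sqrt (by positivity)
  have heq : (fun y : E => Real.sqrt (‖y‖ ^ 2)) = fun y : E => ‖y‖ := by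
    funext y; rw [Real.sqrt_sq (norm_nonneg y)]
  rw [heq] at h2
  refine h2.congr_fderiv ?_
  rw [Real.sqrt_sq (norm_nonneg x)]
  ext y
  simp only [ContinuousLinearMap.coe_smul', Pi.smul_apply, smul_eq_mul]
  ring

/-- Derivative of the inverse norm away from zero. -/
lemma hasFDerivAt_inv_norm_aux {x : E} (hx : x ≠ 0) :
    HasFDerivAt (fun y : E => ‖y‖⁻¹)
      ((-(‖x‖ ^ 2)⁻¹) • (‖x‖⁻¹ • innerSL ℝ x)) x := by
  have hnx : ‖x‖ ≠ 0 := norm_ne_zero_iff.2 hx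
  exact (hasDerivAt_inv hnx).comp_hasFDerivAt x (hasFDerivAt_norm_aux hx)

end Aux

/-- For `1 < p < n`, the `L^p` Sobolev-type inequality `‖f‖_p ≤ (p/n)‖E f‖_p` on
`C₀^∞(ℝⁿ \ {0})` implies the `L^p` Hardy inequality
`‖f/|x|‖_p ≤ (p/(n-p))‖(x/|x|)·∇f‖_p`. -/
theorem euler_sobolev_implies_hardy_Lp {n : ℕ} (p : ℝ) (hp : 1 < p)
    (hpn : p < n) :
    (∀ f : EuclideanSpace ℝ (Fin n) → ℂ, IsTestAwayZero f →
      (∫ x, ‖f x‖ ^ p) ^ (1 / p) ≤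
        (p / n) * (∫ x, ‖eulerOp f x‖ ^ p) ^ (1 / p)) →
    (∀ f : EuclideanSpace ℝ (Fin n) → ℂ, IsTestAwayZero f →
      (∫ x, (‖f x‖ / ‖x‖) ^ p) ^ (1 / p) ≤
        (p / ((n : ℝ) - p)) * (∫ x, ‖radialDeriv f x‖ ^ p) ^ (1 / p)) := by
  intro hSob f hf
  obtain ⟨hsm, hcs, h0⟩ := hf
  have hp0 : (0:ℝ) < p := by linarith
  set g : EuclideanSpace ℝ (Fin n) → ℂ := fun x => (‖x‖⁻¹ : ℝ) • f x with hg_def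
  have hfz : ∀ x ∉ tsupport f, f x = 0 := fun x hx => image_eq_zero_of_notMem_tsupport hx
  have hU : IsOpen (tsupport f)ᶜ := (isClosed_tsupport f).isOpen_compl
  -- eventually-zero facts
  have hev : ∀ x ∉ tsupport f, f =ᶠ[nhds x] 0 := by
    intro x hx
    filter_upwards [hU.mem_nhds hx] with y hy using hfz y hy
  have hgev : ∀ x ∉ tsupport f, g =ᶠ[nhds x] 0 := by
    intro x hx
    filter_upwards [hev x hx] with y hy using by simp [hg_def, hy]
  -- g is smooth
  have hg_smooth : ContDiff ℝ (⊤ : ℕ∞) g := by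
    rw [contDiff_iff_contDiffAt]
    intro x
    by_cases hx : x ∈ tsupport f
    · have hx0 : x ≠ 0 := fun h => h0 (h ▸ hx)
      exact (((contDiffAt_norm ℝ hx0).inv (norm_ne_zero_iff.2 hx0)).smul hsm.contDiffAt)
    · exact contDiffAt_const.congr_of_eventuallyEq (hgev x hx)
  -- g has compact support away from zero
  have hsub : tsupport g ⊆ tsupport f :=
    tsupport_smul_subset_right (fun x : EuclideanSpace ℝ (Fin n) => (‖x‖⁻¹ : ℝ)) f
  have hg_cs : HasCompactSupport g := hcs.of_isClosed_subset (isClosed_tsupport g) hsub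
  have hg_test : IsTestAwayZero g := ⟨hg_smooth, hg_cs, fun h => h0 (hsub h)⟩
  -- pointwise identity for the Euler operator of g
  have hE : ∀ x, eulerOp g x = radialDeriv f x - g x := by
    intro x
    by_cases hx0 : x = 0
    · subst hx0
      have hg0 : fderiv ℝ g 0 = 0 := fderiv_of_notMem_tsupport ℝ (fun h => h0 (hsub h))
      have hf0 : f 0 = 0 := hfz 0 h0
      simp [eulerOp, radialDeriv, hg0, hg_def, hf0]
    · have hnx : ‖x‖ ≠ 0 := norm_ne_zero_iff.2 hx0
      have hfd : HasFDerivAt f (fderiv ℝ f x) x :=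
        (hsm.differentiable (by simp) x).hasFDerivAt
      have hg' : HasFDerivAt g
          ((‖x‖⁻¹ : ℝ) • fderiv ℝ f x +
            ((-(‖x‖ ^ 2)⁻¹) • (‖x‖⁻¹ • innerSL ℝ x)).smulRight (f x)) x :=
        (hasFDerivAt_inv_norm_aux hx0).smul hfd
      have hgd := hg'.fderiv
      have hinner : (innerSL ℝ x) x = ‖x‖ ^ 2 := real_inner_self_eq_norm_sq x
      rw [eulerOp, hgd]
      simp only [ContinuousLinearMap.add_apply, ContinuousLinearMap.coe_smul',
        Pi.smul_apply, ContinuousLinearMap.smulRight_apply, smul_eq_mul, hinner]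
      rw [radialDeriv, ContinuousLinearMap.map_smul]
      have hc : (-(‖x‖ ^ 2)⁻¹ * (‖x‖⁻¹ * ‖x‖ ^ 2)) = -‖x‖⁻¹ := by
        field_simp
      rw [hc]
      simp only [hg_def, neg_smul, sub_eq_add_neg]
  -- the radial derivative of f, continuity and compact support
  set Rf : EuclideanSpace ℝ (Fin n) → ℂ := fun x => radialDeriv f x with hRf_def
  have hfderiv_z : ∀ x ∉ tsupport f, fderiv ℝ f x = 0 := fun x hx =>
    fderiv_of_notMem_tsupport ℝ hx
  have hRz : ∀ x ∉ tsupport f, Rf x = 0 := by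
    intro x hx; simp [hRf_def, radialDeriv, hfderiv_z x hx]
  have hRf_cont : Continuous Rf := by
    rw [continuous_iff_continuousAt]
    intro x
    by_cases hx : x ∈ tsupport f
    · have hx0 : x ≠ 0 := fun h => h0 (h ▸ hx)
      have h1 : ContinuousAt (fun y : EuclideanSpace ℝ (Fin n) => fderiv ℝ f y) x :=
        (hsm.continuous_fderiv (by simp)).continuousAt
      have h2 : ContinuousAt (fun y : EuclideanSpace ℝ (Fin n) => (‖y‖⁻¹ : ℝ) • y) x :=
        ((continuous_norm.continuousAt.inv₀ (norm_ne_zero_iff.2 hx0)).smul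
          continuousAt_id)
      exact (isBoundedBilinearMap_apply.continuous.continuousAt).comp (h1.prodMk h2)
    · have : Rf =ᶠ[nhds x] 0 := by
        filter_upwards [hU.mem_nhds hx] with y hy using hRz y hy
      exact continuousAt_const.congr this.symm
  have hRf_cs : HasCompactSupport Rf := by
    apply hcs.of_isClosed_subset (isClosed_tsupport Rf)
    apply closure_minimal _ (isClosed_tsupport f)
    intro x hx
    by_contra hxc
    exact hx (hRz x hxc)
  -- L^p membership
  set P : ENNReal := ENNReal.ofReal p with hP_def
  have hP0 : P ≠ 0 := by
    simp [hP_def, ENNReal.ofReal_eq_zero]; linarith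
  have hPtop : P ≠ ⊤ := ENNReal.ofReal_ne_top
  have hP1 : 1 ≤ P := by
    rw [hP_def, ← ENNReal.ofReal_one]
    exact ENNReal.ofReal_le_ofReal hp.le
  have hPr : P.toReal = p := ENNReal.toReal_ofReal hp0.le
  have hg_mem : MemLp g P := hg_smooth.continuous.memLp_of_hasCompactSupport hg_cs
  have hR_mem : MemLp Rf P := hRf_cont.memLp_of_hasCompactSupport hRf_cs
  have hsub_mem : MemLp (fun x => Rf x - g x) P := hR_mem.sub hg_mem
  -- Minkowski inequality
  have hM : eLpNorm (fun x => Rf x - g x) P volume ≤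
      eLpNorm Rf P volume + eLpNorm g P volume :=
    eLpNorm_sub_le hR_mem.1 hg_mem.1 hP1
  rw [hsub_mem.eLpNorm_eq_integral_rpow_norm hP0 hPtop,
    hR_mem.eLpNorm_eq_integral_rpow_norm hP0 hPtop,
    hg_mem.eLpNorm_eq_integral_rpow_norm hP0 hPtop, hPr,
    ← ENNReal.ofReal_add (by positivity) (by positivity)] at hM
  have hMink : (∫ x, ‖Rf x - g x‖ ^ p) ^ p⁻¹ ≤
      (∫ x, ‖Rf x‖ ^ p) ^ p⁻¹ + (∫ x, ‖g x‖ ^ p) ^ p⁻¹ :=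
    (ENNReal.ofReal_le_ofReal_iff (by positivity)).1 hM
  -- apply the Sobolev hypothesis to g
  have hS := hSob g hg_test
  have hEg : (∫ x, ‖eulerOp g x‖ ^ p) = ∫ x, ‖Rf x - g x‖ ^ p := by
    congr 1; funext x; rw [hE x]
  rw [hEg] at hS
  -- identify the left-hand side
  have hLHS : (∫ x, (‖f x‖ / ‖x‖) ^ p) = ∫ x, ‖g x‖ ^ p := by
    congr 1; funext x
    have : ‖g x‖ = ‖f x‖ / ‖x‖ := by
      simp [hg_def, norm_smul, abs_of_nonneg (inv_nonneg.2 (norm_nonneg x)),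
        div_eq_mul_inv, mul_comm]
    rw [this]
  rw [hLHS]
  have hRI : (∫ x, ‖radialDeriv f x‖ ^ p) = ∫ x, ‖Rf x‖ ^ p := rfl
  rw [hRI]
  have hn0 : (0:ℝ) < n := lt_trans hp0 hpn
  have hMink' : (∫ x, ‖Rf x - g x‖ ^ p) ^ (1 / p) ≤
      (∫ x, ‖Rf x‖ ^ p) ^ (1 / p) + (∫ x, ‖g x‖ ^ p) ^ (1 / p) := by
    simpa [one_div] using hMink
  have key : (∫ x, ‖g x‖ ^ p) ^ (1 / p) ≤
      (p / n) * ((∫ x, ‖Rf x‖ ^ p) ^ (1 / p) + (∫ x, ‖g x‖ ^ p) ^ (1 / p)) :=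
    le_trans hS (mul_le_mul_of_nonneg_left hMink' (by positivity))
  set A := (∫ x, ‖g x‖ ^ p) ^ (1 / p) with hA_def
  set B := (∫ x, ‖Rf x‖ ^ p) ^ (1 / p) with hB_def
  rw [div_mul_eq_mul_div, le_div_iff₀ (by linarith)]
  rw [div_mul_eq_mul_div, le_div_iff₀ hn0] at key
  linarith
end

section
/- Let 1 < p < ∞ and let f, g be real-valued functions in L^p(ℝⁿ). Then ‖g‖^p_{L^p} − ‖f‖^p_{L^p} + p ∫ (|f|^p − |f|^{p−2} f g) dx = p ∫ I_p(f, g)(x) |f(x) − g(x)|² dx, where I_p(h, k)(x) = (p−1) ∫_0^1 |ξ h(x) + (1−ξ) k(x)|^{p−2} ξ dξ; in particular I_p ≥ 0 pointwise. -/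
/-!
Taylor's formula with integral remainder for `φ t = |t| ^ p` along the segment
`c ξ = ξ * a + (1 - ξ) * b`: the function `K ξ = φ (c ξ) - ξ (a - b) φ' (c ξ)` has derivative
`-ξ (a - b)² φ'' (c ξ) = -p (p - 1) (a - b)² |c ξ| ^ (p - 2) ξ`, and `K 1 - K 0` is the pointwise
identity. For `p < 2` the second derivative blows up at `0`, but `c` vanishes at most once and
`|c| ^ (p - 2)` stays integrable because `p - 2 > -1`, so the fundamental theorem of calculus off a
countable set applies. Integrating the pointwise identity gives the theorem; every term is
integrable since `|f| ^ (p - 1) |g| ≤ |f| ^ p + |g| ^ p`.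
-/

open MeasureTheory Real Set

section

variable {p : ℝ}

theorem abs_rpow_sub_two_mul_self (hp : 1 < p) (a : ℝ) : |a| ^ (p - 2) * a * a = |a| ^ p := by
  rw [mul_assoc, ← abs_mul_abs_self, ← mul_assoc,
    ← rpow_add_one' (abs_nonneg a) (by linarith), ← rpow_add_one' (abs_nonneg a) (by linarith)]
  ring_nf

theorem hasDerivAt_abs_rpow_sub_two_mul {t : ℝ} (ht : t ≠ 0) :
    HasDerivAt (fun s : ℝ => |s| ^ (p - 2) * s) ((p - 1) * |t| ^ (p - 2)) t := by
  have hsign : (SignType.sign t : ℝ) * t = |t| := by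
    rcases ht.lt_or_gt with h | h <;> simp [h, abs_of_neg, abs_of_pos]
  have hpow : |t| ^ (p - 2 - 1) * |t| = |t| ^ (p - 2) := by
    rw [rpow_sub_one (abs_ne_zero.2 ht), div_mul_cancel₀ _ (abs_ne_zero.2 ht)]
  refine (((hasDerivAt_abs ht).rpow_const (Or.inl (abs_ne_zero.2 ht))).mul
    (hasDerivAt_id' t)).congr_deriv ?_
  linear_combination hpow * (p - 2) + (p - 2) * |t| ^ (p - 2 - 1) * hsign

theorem continuous_abs_rpow_sub_two_mul (hp : 1 < p) :
    Continuous fun t : ℝ => |t| ^ (p - 2) * t := by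
  have h := (contDiff_norm_rpow (E := ℝ) hp).continuous_deriv le_rfl
  have hderiv : deriv (fun t : ℝ => ‖t‖ ^ p) = fun t => p * (|t| ^ (p - 2) * t) :=
    funext fun t => by simpa [mul_assoc] using (hasDerivAt_abs_rpow t hp).deriv
  rw [hderiv] at h
  simpa [(by linarith : p ≠ 0)] using h.div_const p

theorem intervalIntegrable_abs_rpow {r : ℝ} (hr : -1 < r) (u v : ℝ) :
    IntervalIntegrable (fun x : ℝ => |x| ^ r) volume u v := by
  have hpos : ∀ c, 0 ≤ c → IntervalIntegrable (fun x : ℝ => |x| ^ r) volume 0 c := by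
    intro c hc
    refine (intervalIntegral.intervalIntegrable_rpow' hr).congr ?_
    intro x hx
    rw [uIoc_of_le hc] at hx
    simp only [abs_of_pos hx.1]
  have hzero : ∀ c, IntervalIntegrable (fun x : ℝ => |x| ^ r) volume 0 c := by
    intro c
    rcases le_total 0 c with hc | hc
    · exact hpos c hc
    · simpa using ((IntervalIntegrable.iff_comp_neg).mp (hpos (-c) (by linarith)))
  exact (hzero u).symm.trans (hzero v)

theorem intervalIntegrable_abs_lineMap_rpow_mul {r : ℝ} (hr : -1 < r) {a b : ℝ} (hab : a ≠ b) :
    IntervalIntegrable (fun ξ : ℝ => |ξ * a + (1 - ξ) * b| ^ r * ξ) volume 0 1 := by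
  have h := ((intervalIntegrable_abs_rpow hr b a).comp_add_right b).comp_mul_left (c := a - b)
  rw [sub_self, zero_div, div_self (sub_ne_zero.2 hab)] at h
  refine (h.congr fun ξ _ => ?_).mul_continuousOn continuousOn_id
  rw [show (a - b) * ξ + b = ξ * a + (1 - ξ) * b by ring]

theorem abs_rpow_sub_one_mul_abs_le (hp : 1 < p) (a b : ℝ) :
    |a| ^ (p - 1) * |b| ≤ |a| ^ p + |b| ^ p := by
  have hself : ∀ t : ℝ, |t| ^ (p - 1) * |t| = |t| ^ p := fun t => by
    rw [← rpow_add_one' (abs_nonneg t) (by linarith), sub_add_cancel]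
  rcases le_total |a| |b| with h | h
  · calc |a| ^ (p - 1) * |b| ≤ |b| ^ (p - 1) * |b| := by gcongr
      _ = |b| ^ p := hself b
      _ ≤ |a| ^ p + |b| ^ p := le_add_of_nonneg_left (by positivity)
  · calc |a| ^ (p - 1) * |b| ≤ |a| ^ (p - 1) * |a| := by gcongr
      _ = |a| ^ p := hself a
      _ ≤ |a| ^ p + |b| ^ p := le_add_of_nonneg_right (by positivity)

/-- The weight `I_p(a, b)` of the remainder. -/
noncomputable def lpConvexityWeight (p a b : ℝ) : ℝ :=
  (p - 1) * ∫ ξ in (0 : ℝ)..1, |ξ * a + (1 - ξ) * b| ^ (p - 2) * ξ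

theorem lpConvexityWeight_nonneg (hp : 1 ≤ p) (a b : ℝ) : 0 ≤ lpConvexityWeight p a b :=
  mul_nonneg (sub_nonneg.2 hp) <| intervalIntegral.integral_nonneg zero_le_one fun _ hξ =>
    mul_nonneg (rpow_nonneg (abs_nonneg _) _) hξ.1

theorem mul_lpConvexityWeight_mul_sq_eq (hp : 1 < p) (a b : ℝ) :
    p * (lpConvexityWeight p a b * (a - b) ^ 2) =
      |b| ^ p - |a| ^ p + p * (|a| ^ p - |a| ^ (p - 2) * a * b) := by
  rcases eq_or_ne a b with rfl | hab
  · rw [abs_rpow_sub_two_mul_self hp]; ring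
  set c : ℝ → ℝ := fun ξ => ξ * a + (1 - ξ) * b with hc_def
  have hc : ∀ ξ, HasDerivAt c (a - b) ξ := fun ξ =>
    (((hasDerivAt_id' ξ).mul_const a).add
      (((hasDerivAt_id' ξ).const_sub 1).mul_const b)).congr_deriv (by ring)
  have hzeros : {ξ | c ξ = 0}.Countable := by
    refine Set.Subsingleton.countable fun x hx y hy => ?_
    have hxy : (x - y) * (a - b) = 0 := by
      simp only [hc_def, mem_ofPred_eq] at hx hy
      linear_combination hx - hy
    exact sub_eq_zero.1 ((mul_eq_zero.1 hxy).resolve_right (sub_ne_zero.2 hab))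
  have hint : IntervalIntegrable (fun ξ => |c ξ| ^ (p - 2) * ξ) volume 0 1 :=
    intervalIntegrable_abs_lineMap_rpow_mul (by linarith) hab
  set K : ℝ → ℝ := fun ξ => |c ξ| ^ p - p * ξ * (a - b) * (|c ξ| ^ (p - 2) * c ξ)
  have hK_cont : Continuous K := by
    have hcont : Continuous c := by fun_prop
    exact ((continuous_abs.rpow_const fun _ => Or.inr (by linarith)).comp hcont).sub
      (((continuous_const.mul continuous_id).mul continuous_const).mul
        ((continuous_abs_rpow_sub_two_mul hp).comp hcont))
  have hK_deriv : ∀ ξ, c ξ ≠ 0 →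
      HasDerivAt K (-(p * (p - 1) * (a - b) ^ 2) * (|c ξ| ^ (p - 2) * ξ)) ξ := fun ξ hξ =>
    (((hasDerivAt_abs_rpow (c ξ) hp).comp ξ (hc ξ)).sub
      ((((hasDerivAt_id' ξ).const_mul p).mul_const (a - b)).mul
        ((hasDerivAt_abs_rpow_sub_two_mul hξ).comp ξ (hc ξ)))).congr_deriv
      (by simp only [Function.comp_apply]; ring)
  have hftc := integral_eq_of_hasDerivAt_off_countable_of_le K _ zero_le_one hzeros
    hK_cont.continuousOn (fun ξ hξ => hK_deriv ξ hξ.2) (hint.const_mul _)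
  rw [intervalIntegral.integral_const_mul] at hftc
  simp only [K, hc_def, neg_mul, one_mul, sub_self, zero_mul, add_zero, mul_one, sub_zero, zero_add,
    mul_zero] at hftc
  unfold lpConvexityWeight
  linear_combination -hftc + p * abs_rpow_sub_two_mul_self hp a

variable {α : Type*} [MeasurableSpace α] {μ : Measure α} {f g : α → ℝ}

theorem MeasureTheory.MemLp.integrable_abs_rpow (hp : 0 < p)
    (hf : MemLp f (ENNReal.ofReal p) μ) : Integrable (fun x => |f x| ^ p) μ := by
  simpa [ENNReal.toReal_ofReal hp.le] using
    hf.integrable_norm_rpow (by simpa using hp) ENNReal.ofReal_ne_top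

theorem MeasureTheory.MemLp.integrable_abs_rpow_sub_two_mul_mul (hp : 1 < p)
    (hf : MemLp f (ENNReal.ofReal p) μ) (hg : MemLp g (ENNReal.ofReal p) μ) :
    Integrable (fun x => |f x| ^ (p - 2) * f x * g x) μ := by
  refine ((hf.integrable_abs_rpow (by linarith)).add (hg.integrable_abs_rpow (by linarith))).mono'
    (((continuous_abs_rpow_sub_two_mul hp).comp_aestronglyMeasurable hf.1).mul hg.1)
    (ae_of_all _ fun x => ?_)
  calc ‖|f x| ^ (p - 2) * f x * g x‖ = |f x| ^ (p - 1) * |g x| := by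
        rw [norm_mul, norm_mul, norm_of_nonneg (by positivity), norm_eq_abs, norm_eq_abs,
          ← rpow_add_one' (abs_nonneg _) (by linarith)]
        ring_nf
    _ ≤ |f x| ^ p + |g x| ^ p := abs_rpow_sub_one_mul_abs_le hp _ _

end

/-- Convexity-remainder identity for `L^p` norms: for `1 < p < ∞` and real-valued
`f, g ∈ L^p(ℝⁿ)`,
`‖g‖_p^p - ‖f‖_p^p + p ∫ (|f|^p - |f|^{p-2} f g) = p ∫ I_p(f,g) |f - g|²`
with `I_p(f,g)(x) = (p-1) ∫_0^1 |ξ f(x) + (1-ξ) g(x)|^{p-2} ξ dξ ≥ 0`. -/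
theorem Lp_convexity_remainder {n : ℕ} (p : ℝ) (hp : 1 < p)
    (f g : EuclideanSpace ℝ (Fin n) → ℝ)
    (hf : MemLp f (ENNReal.ofReal p) volume)
    (hg : MemLp g (ENNReal.ofReal p) volume) :
    (∫ x, |g x| ^ p) - (∫ x, |f x| ^ p) +
        p * ∫ x, (|f x| ^ p - |f x| ^ (p - 2) * f x * g x) =
      p * ∫ x, ((p - 1) * ∫ ξ in (0 : ℝ)..1,
          |ξ * f x + (1 - ξ) * g x| ^ (p - 2) * ξ) * (f x - g x) ^ 2 ∧
    ∀ x, 0 ≤ (p - 1) * ∫ ξ in (0 : ℝ)..1, |ξ * f x + (1 - ξ) * g x| ^ (p - 2) * ξ := by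
  have hf_int := hf.integrable_abs_rpow (by linarith)
  have hg_int := hg.integrable_abs_rpow (by linarith)
  have hfg_int := hf.integrable_abs_rpow_sub_two_mul_mul hp hg
  refine ⟨?_, fun x => lpConvexityWeight_nonneg hp.le (f x) (g x)⟩
  calc _ = ∫ x, (|g x| ^ p - |f x| ^ p + p * (|f x| ^ p - |f x| ^ (p - 2) * f x * g x)) := by
        rw [integral_add (by exact hg_int.sub hf_int)
          (by exact (hf_int.sub hfg_int).const_mul p), integral_sub hg_int hf_int,
          integral_const_mul]
    _ = ∫ x, p * (lpConvexityWeight p (f x) (g x) * (f x - g x) ^ 2) := by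
        simp only [mul_lpConvexityWeight_mul_sq_eq hp]
    _ = _ := integral_const_mul _ _
end

section
/- Let Ω ⊂ ℝⁿ be a bounded open set, 1 < p < ∞, and let R = sup_{x ∈ Ω} |x|. Then for every f ∈ C_0^∞(Ω \ {0}) one has the Poincaré-type inequality ‖f‖_{L^p(Ω)} ≤ (R p / n) ‖ (x/|x|)·∇f ‖_{L^p(Ω)}. -/
open MeasureTheory Real

/-- Poincaré-type inequality: for a bounded open `Ω ⊆ ℝⁿ`, `1 < p < ∞`,
`R = sup_{x ∈ Ω} |x|` and `f ∈ C₀^∞(Ω \ {0})`,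
`‖f‖_{L^p(Ω)} ≤ (Rp/n) ‖(x/|x|)·∇f‖_{L^p(Ω)}`. -/
theorem euler_poincare {n : ℕ} (Ω : Set (EuclideanSpace ℝ (Fin n)))
    (hΩo : IsOpen Ω) (hΩb : Bornology.IsBounded Ω) (p : ℝ) (hp : 1 < p)
    (R : ℝ) (hR : R = sSup ((fun x => ‖x‖) '' Ω))
    (f : EuclideanSpace ℝ (Fin n) → ℂ)
    (hf : ContDiff ℝ (⊤ : ℕ∞) f) (hfc : HasCompactSupport f)
    (hfs : tsupport f ⊆ Ω)
    (hf0 : (0 : EuclideanSpace ℝ (Fin n)) ∉ tsupport f) :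
    (∫ x in Ω, ‖f x‖ ^ p) ^ (1 / p) ≤
      (R * p / n) * (∫ x in Ω, ‖radialDeriv f x‖ ^ p) ^ (1 / p) := by
  have hp0 : (0:ℝ) < p := lt_trans one_pos hp
  have hR0 : 0 ≤ R := by
    rw [hR]
    exact Real.sSup_nonneg (by rintro y ⟨x, -, rfl⟩; exact norm_nonneg x)
  have hfz : ∀ x, x ∉ Ω → f x = 0 := fun x hx =>
    image_eq_zero_of_notMem_tsupport (fun h => hx (hfs h))
  have hdz : ∀ x : EuclideanSpace ℝ (Fin n), x ∉ tsupport f → fderiv ℝ f x = 0 := fun x hx =>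
    (HasFDerivAt.of_notMem_tsupport (𝕜 := ℝ) hx).fderiv
  have hrz : ∀ x, x ∉ Ω → radialDeriv f x = 0 := by
    intro x hx
    show fderiv ℝ f x (‖x‖⁻¹ • x) = 0
    rw [hdz x (fun h => hx (hfs h))]
    rfl
  set A := ∫ x, ‖f x‖ ^ p with hA
  set B := ∫ x, ‖radialDeriv f x‖ ^ p with hB
  have hAΩ : ∫ x in Ω, ‖f x‖ ^ p = A :=
    setIntegral_eq_integral_of_forall_compl_eq_zero
      (fun x hx => by rw [hfz x hx]; simp [Real.zero_rpow hp0.ne'])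
  have hBΩ : ∫ x in Ω, ‖radialDeriv f x‖ ^ p = B :=
    setIntegral_eq_integral_of_forall_compl_eq_zero
      (fun x hx => by rw [hrz x hx]; simp [Real.zero_rpow hp0.ne'])
  rw [hAΩ, hBΩ]
  have hAnn : 0 ≤ A := integral_nonneg fun x => Real.rpow_nonneg (norm_nonneg _) _
  have hBnn : 0 ≤ B := integral_nonneg fun x => Real.rpow_nonneg (norm_nonneg _) _
  rcases Nat.eq_zero_or_pos n with hn | hn
  · subst hn
    have hfzero : ∀ x : EuclideanSpace ℝ (Fin 0), f x = 0 := fun x => by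
      rw [Subsingleton.elim x 0]
      exact image_eq_zero_of_notMem_tsupport hf0
    have hA0 : A = 0 := by
      rw [hA]
      simp [hfzero, Real.zero_rpow hp0.ne']
    rw [hA0, Real.zero_rpow (one_div_ne_zero hp0.ne'), Nat.cast_zero, div_zero, zero_mul]
  have hnR : (0:ℝ) < n := by exact_mod_cast hn
  have hf1 : ContDiff ℝ 1 f := hf.of_le (by simp)
  have hfd : Differentiable ℝ f := (contDiff_one_iff_fderiv.mp hf1).1
  have hdf_cont : Continuous (fderiv ℝ f) := (contDiff_one_iff_fderiv.mp hf1).2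
  -- continuity of the radial derivative
  have hr_cont : Continuous (radialDeriv f) := by
    rw [continuous_iff_continuousAt]
    intro x
    by_cases hx : x = 0
    · subst hx
      have hU : (tsupport f)ᶜ ∈ nhds (0:EuclideanSpace ℝ (Fin n)) :=
        (isClosed_tsupport f).isOpen_compl.mem_nhds hf0
      have hev : radialDeriv f =ᶠ[nhds (0:EuclideanSpace ℝ (Fin n))] (fun _ => 0) := by
        filter_upwards [hU] with y hy
        show fderiv ℝ f y (‖y‖⁻¹ • y) = 0
        rw [hdz y hy]; rfl
      exact ContinuousAt.congr continuousAt_const hev.symm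
    · have h2 : ContinuousAt (fun y : EuclideanSpace ℝ (Fin n) => ‖y‖⁻¹ • y) x :=
        ((continuousAt_id.norm.inv₀ (norm_ne_zero_iff.mpr hx)).smul continuousAt_id)
      exact ContinuousAt.comp (isBoundedBilinearMap_apply.continuous.continuousAt)
        (hdf_cont.continuousAt.prodMk h2)
  have hr_supp : HasCompactSupport (radialDeriv f) := by
    apply hfc.mono'
    intro x hx
    by_contra hmem
    apply hx
    show fderiv ℝ f x (‖x‖⁻¹ • x) = 0
    rw [hdz x hmem]
    rfl
  -- the function u = ‖f‖^p
  set u : EuclideanSpace ℝ (Fin n) → ℝ := fun x => ‖f x‖ ^ p with hu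
  have hu1 : ContDiff ℝ 1 u := hf1.norm_rpow hp
  have hud : Differentiable ℝ u := hu1.differentiable one_ne_zero
  have hucont : Continuous u := hu1.continuous
  have hduc : Continuous (fderiv ℝ u) := (contDiff_one_iff_fderiv.mp hu1).2
  have hucs : HasCompactSupport u :=
    hfc.comp_left (g := fun z : ℂ => ‖z‖ ^ p) (by simp [Real.zero_rpow hp0.ne'])
  have hducs : HasCompactSupport (fderiv ℝ u) := hucs.fderiv (𝕜 := ℝ)
  have hui : Integrable u := hucont.integrable_of_hasCompactSupport hucs
  -- coordinatewise integration by parts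
  have h2 : ∀ i : Fin n, Integrable
      (fun x : EuclideanSpace ℝ (Fin n) => x i * fderiv ℝ u x (EuclideanSpace.single i (1:ℝ))) := by
    intro i
    apply Continuous.integrable_of_hasCompactSupport
    · exact ((EuclideanSpace.proj (𝕜 := ℝ) i).continuous).mul (hduc.clm_apply continuous_const)
    · apply hducs.mono
      intro x hx
      simp only [Function.mem_support] at hx ⊢
      intro h0
      apply hx
      rw [h0]
      simp
  have key : ∀ i : Fin n,
      ∫ x : EuclideanSpace ℝ (Fin n), x i * fderiv ℝ u x (EuclideanSpace.single i (1:ℝ)) = - ∫ x : EuclideanSpace ℝ (Fin n), u x := by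
    intro i
    have hproj : Differentiable ℝ (fun x : EuclideanSpace ℝ (Fin n) => x i) :=
      (EuclideanSpace.proj (𝕜 := ℝ) i).differentiable
    have hfd_proj : ∀ x : EuclideanSpace ℝ (Fin n), fderiv ℝ (fun x : EuclideanSpace ℝ (Fin n) => x i) x (EuclideanSpace.single i (1:ℝ)) = 1 := by
      intro x
      have : fderiv ℝ (fun x : EuclideanSpace ℝ (Fin n) => x i) x = EuclideanSpace.proj (𝕜 := ℝ) i :=
        (EuclideanSpace.proj (𝕜 := ℝ) i).fderiv
      rw [this]
      simp
    have h1 : Integrable (fun x : EuclideanSpace ℝ (Fin n) =>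
        fderiv ℝ (fun x : EuclideanSpace ℝ (Fin n) => x i) x (EuclideanSpace.single i (1:ℝ)) * u x) := by
      apply hui.congr
      filter_upwards with x
      rw [hfd_proj x, one_mul]
    have h3 : Integrable (fun x : EuclideanSpace ℝ (Fin n) => x i * u x) := by
      apply Continuous.integrable_of_hasCompactSupport
      · exact ((EuclideanSpace.proj (𝕜 := ℝ) i).continuous).mul hucont
      · apply hucs.mono
        intro x hx
        simp only [Function.mem_support] at hx ⊢
        intro h0
        apply hx; rw [h0, mul_zero]
    have := integral_mul_fderiv_eq_neg_fderiv_mul_of_integrable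
      (μ := (volume : Measure (EuclideanSpace ℝ (Fin n)))) (f := fun x : EuclideanSpace ℝ (Fin n) => x i) (g := u)
      (v := EuclideanSpace.single i (1:ℝ)) h1 (h2 i) h3 (fun x _ => hproj x) (fun x _ => hud x)
    rw [this]
    congr 1
    apply integral_congr_ae
    filter_upwards with x
    rw [hfd_proj x, one_mul]
  -- the divergence identity
  have hsum : ∀ x : EuclideanSpace ℝ (Fin n), fderiv ℝ u x x =
      ∑ i : Fin n, x i * fderiv ℝ u x (EuclideanSpace.single i (1:ℝ)) := by
    intro x
    have hxe : x = ∑ i : Fin n, x i • EuclideanSpace.single i (1:ℝ) := by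
      have h := (EuclideanSpace.basisFun (Fin n) ℝ).sum_repr x
      simp only [EuclideanSpace.basisFun_apply, EuclideanSpace.basisFun_repr] at h
      exact h.symm
    calc fderiv ℝ u x x
        = fderiv ℝ u x (∑ i : Fin n, x i • EuclideanSpace.single i (1:ℝ)) := by rw [← hxe]
      _ = ∑ i : Fin n, x i * fderiv ℝ u x (EuclideanSpace.single i (1:ℝ)) := by
          rw [map_sum]
          simp [smul_eq_mul]
  have hDcont : Continuous (fun x : EuclideanSpace ℝ (Fin n) => fderiv ℝ u x x) := hduc.clm_apply continuous_id
  have hDint : Integrable (fun x : EuclideanSpace ℝ (Fin n) => fderiv ℝ u x x) := by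
    apply hDcont.integrable_of_hasCompactSupport
    apply hducs.mono
    intro x hx
    simp only [Function.mem_support] at hx ⊢
    intro h0
    apply hx; rw [h0]; rfl
  have hdiv : ∫ x : EuclideanSpace ℝ (Fin n), fderiv ℝ u x x = -((n:ℝ) * ∫ x : EuclideanSpace ℝ (Fin n), u x) := by
    calc ∫ x : EuclideanSpace ℝ (Fin n), fderiv ℝ u x x
        = ∫ x : EuclideanSpace ℝ (Fin n), ∑ i : Fin n, x i * fderiv ℝ u x (EuclideanSpace.single i (1:ℝ)) :=
          integral_congr_ae (by filter_upwards with x; exact hsum x)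
      _ = ∑ i : Fin n, ∫ x : EuclideanSpace ℝ (Fin n), x i * fderiv ℝ u x (EuclideanSpace.single i (1:ℝ)) :=
          integral_finset_sum _ (fun i _ => h2 i)
      _ = ∑ _i : Fin n, (- ∫ x : EuclideanSpace ℝ (Fin n), u x) := Finset.sum_congr rfl (fun i _ => key i)
      _ = -((n:ℝ) * ∫ x : EuclideanSpace ℝ (Fin n), u x) := by
          simp only [Finset.sum_const, Finset.card_univ, Fintype.card_fin, nsmul_eq_mul]
          ring
  -- the pointwise bound
  set g : EuclideanSpace ℝ (Fin n) → ℝ := fun x => ‖f x‖ ^ (p-1) * ‖radialDeriv f x‖ with hg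
  have hgnn : ∀ x, 0 ≤ g x := fun x =>
    mul_nonneg (Real.rpow_nonneg (norm_nonneg _) _) (norm_nonneg _)
  have hbound : ∀ x : EuclideanSpace ℝ (Fin n), |fderiv ℝ u x x| ≤ R * p * g x := by
    intro x
    by_cases hx : x ∈ tsupport f
    · have hxΩ := hfs hx
      have hbdd : BddAbove ((fun x : EuclideanSpace ℝ (Fin n) => ‖x‖) '' Ω) := by
        obtain ⟨r, hr⟩ := hΩb.subset_closedBall 0
        exact ⟨r, by rintro y ⟨z, hz, rfl⟩; simpa using mem_closedBall_zero_iff.mp (hr hz)⟩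
      have hxR : ‖x‖ ≤ R := by
        rw [hR]; exact le_csSup hbdd ⟨x, hxΩ, rfl⟩
      have hx0 : x ≠ 0 := fun h => hf0 (h ▸ hx)
      have hfu : fderiv ℝ u x = (p * ‖f x‖ ^ (p-2)) • (innerSL ℝ (f x)).comp (fderiv ℝ f x) :=
        hfd.fderiv_norm_rpow hp
      have hxx : fderiv ℝ f x x = ‖x‖ • radialDeriv f x := by
        show _ = ‖x‖ • fderiv ℝ f x (‖x‖⁻¹ • x)
        rw [← (fderiv ℝ f x).map_smul, smul_smul, mul_inv_cancel₀ (norm_ne_zero_iff.mpr hx0), one_smul]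
      have hDx : fderiv ℝ u x x =
          (p * ‖f x‖ ^ (p-2)) * (‖x‖ * inner ℝ (f x) (radialDeriv f x)) := by
        rw [hfu]
        simp only [ContinuousLinearMap.coe_smul', Pi.smul_apply,
          ContinuousLinearMap.coe_comp', Function.comp_apply, innerSL_apply_apply, smul_eq_mul]
        rw [hxx, real_inner_smul_right]
      have key1 : |inner (𝕜 := ℝ) (f x) (radialDeriv f x)| ≤ ‖f x‖ * ‖radialDeriv f x‖ :=
        abs_real_inner_le_norm _ _
      have key2 : ‖f x‖ ^ (p-2) * ‖f x‖ = ‖f x‖ ^ (p-1) := by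
        have : ‖f x‖ ^ (p-1) = ‖f x‖ ^ ((p-2) + 1) := by congr 1; ring
        rw [this, Real.rpow_add' (norm_nonneg _) (by linarith), Real.rpow_one]
      have hs : (0:ℝ) ≤ ‖f x‖ ^ (p-2) := Real.rpow_nonneg (norm_nonneg _) _
      calc |fderiv ℝ u x x|
          = p * ‖f x‖ ^ (p-2) * (‖x‖ * |inner (𝕜 := ℝ) (f x) (radialDeriv f x)|) := by
            rw [hDx, abs_mul, abs_mul, abs_mul, abs_of_nonneg hp0.le, abs_of_nonneg hs,
              abs_of_nonneg (norm_nonneg x)]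
        _ ≤ p * ‖f x‖ ^ (p-2) * (R * (‖f x‖ * ‖radialDeriv f x‖)) := by
            apply mul_le_mul_of_nonneg_left _ (by positivity)
            exact mul_le_mul hxR key1 (abs_nonneg _) hR0
        _ = R * p * (‖f x‖ ^ (p-1) * ‖radialDeriv f x‖) := by
            rw [← key2]; ring
    · have hfu0 : fderiv ℝ u x = 0 := by
        have heq : u =ᶠ[nhds x] (fun _ => 0) := by
          filter_upwards [((isClosed_tsupport f).isOpen_compl).mem_nhds hx] with y hy
          simp [hu, image_eq_zero_of_notMem_tsupport hy, Real.zero_rpow hp0.ne']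
        rw [heq.fderiv_eq, fderiv_fun_const]
        rfl
      rw [hfu0]
      simp only [ContinuousLinearMap.zero_apply, abs_zero]
      positivity
  -- integrate the bound
  have hgcont : Continuous g :=
    ((hf.continuous.norm).rpow_const (fun x => Or.inr (by linarith))).mul hr_cont.norm
  have hgsupp : HasCompactSupport g := by
    apply hfc.mono
    intro x hx
    simp only [Function.mem_support] at hx ⊢
    intro h0
    apply hx
    rw [hg]
    simp [h0, Real.zero_rpow (by linarith : p - 1 ≠ 0)]
  have hgi : Integrable g := hgcont.integrable_of_hasCompactSupport hgsupp
  have step : (n:ℝ) * A ≤ R * p * ∫ x : EuclideanSpace ℝ (Fin n), g x := by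
    calc (n:ℝ) * A = ∫ x : EuclideanSpace ℝ (Fin n), -(fderiv ℝ u x x) := by
          rw [integral_neg, hdiv]; ring
      _ ≤ ∫ x : EuclideanSpace ℝ (Fin n), R * p * g x := by
          apply integral_mono hDint.neg (hgi.const_mul _)
          intro x
          exact (neg_le_abs _).trans (hbound x)
      _ = R * p * ∫ x : EuclideanSpace ℝ (Fin n), g x := integral_const_mul _ _
  -- Hölder
  have hq : p.HolderConjugate (p / (p-1)) := by
    rw [Real.holderConjugate_iff]
    constructor
    · exact hp
    · field_simp; ring
  set q := p / (p-1) with hqdef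
  have hq1 : 0 < q := hq.symm.pos
  have hFmem : MemLp (fun x : EuclideanSpace ℝ (Fin n) => ‖f x‖ ^ (p-1)) (ENNReal.ofReal q) volume := by
    apply Continuous.memLp_of_hasCompactSupport (μ := (volume : Measure (EuclideanSpace ℝ (Fin n))))
    · exact (hf.continuous.norm).rpow_const (fun x => Or.inr (by linarith))
    · apply hfc.mono
      intro x hx
      simp only [Function.mem_support] at hx ⊢
      intro h0
      apply hx
      simp [h0, Real.zero_rpow (by linarith : p - 1 ≠ 0)]
  have hGmem : MemLp (fun x : EuclideanSpace ℝ (Fin n) => ‖radialDeriv f x‖) (ENNReal.ofReal p) volume := by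
    apply Continuous.memLp_of_hasCompactSupport (μ := (volume : Measure (EuclideanSpace ℝ (Fin n))))
    · exact hr_cont.norm
    · exact hr_supp.norm
  have hold : ∫ x : EuclideanSpace ℝ (Fin n), g x ≤
      (∫ x : EuclideanSpace ℝ (Fin n), (‖f x‖ ^ (p-1)) ^ q) ^ (1/q) * (∫ x : EuclideanSpace ℝ (Fin n), ‖radialDeriv f x‖ ^ p) ^ (1/p) :=
    integral_mul_le_Lp_mul_Lq_of_nonneg hq.symm
      (Filter.Eventually.of_forall fun x => Real.rpow_nonneg (norm_nonneg _) _)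
      (Filter.Eventually.of_forall fun x => norm_nonneg _) hFmem hGmem
  have hpq1 : (p - 1) * q = p := by
    have h1 : p - 1 ≠ 0 := by linarith
    rw [hqdef]
    field_simp
  have hFq : ∫ x : EuclideanSpace ℝ (Fin n), (‖f x‖ ^ (p-1)) ^ q = A := by
    apply integral_congr_ae
    filter_upwards with x
    rw [← Real.rpow_mul (norm_nonneg _), hpq1]
  have holder2 : (n:ℝ) * A ≤ R * p * (A ^ (1/q) * B ^ (1/p)) := by
    refine step.trans ?_
    have h4 := mul_le_mul_of_nonneg_left hold (by positivity : (0:ℝ) ≤ R * p)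
    rwa [hFq, ← hB] at h4
  by_cases hA0 : A = 0
  · rw [hA0, Real.zero_rpow (one_div_ne_zero hp0.ne')]
    exact mul_nonneg (by positivity) (Real.rpow_nonneg hBnn _)
  · have hApos : 0 < A := hAnn.lt_of_ne (Ne.symm hA0)
    have hAq : 0 < A ^ (1/q) := Real.rpow_pos_of_pos hApos _
    have hexp : 1/q + 1/p = 1 := by
      have := hq.inv_add_inv_eq_one
      simp only [one_div]
      linarith
    have hsplit : A = A ^ (1/q) * A ^ (1/p) := by
      rw [← Real.rpow_add hApos, hexp, Real.rpow_one]
    have h2' : (n:ℝ) * A ^ (1/p) ≤ R * p * B ^ (1/p) := by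
      have h3 : A ^ (1/q) * ((n:ℝ) * A ^ (1/p)) ≤ A ^ (1/q) * (R * p * B ^ (1/p)) := by
        calc A ^ (1/q) * ((n:ℝ) * A ^ (1/p)) = (n:ℝ) * (A ^ (1/q) * A ^ (1/p)) := by ring
          _ = (n:ℝ) * A := by rw [← hsplit]
          _ ≤ R * p * (A ^ (1/q) * B ^ (1/p)) := holder2
          _ = A ^ (1/q) * (R * p * B ^ (1/p)) := by ring
      exact le_of_mul_le_mul_left h3 hAq
    calc A ^ (1/p) = ((n:ℝ) * A ^ (1/p)) / n := by field_simp
      _ ≤ (R * p * B ^ (1/p)) / n := (div_le_div_iff_of_pos_right hnR).mpr h2'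
      _ = R * p / n * B ^ (1/p) := by ring
end
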